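/- arXiv:1109.4862 — 12 statements merged into one kernel-verified Lean document; each statement's English description precedes it below -/
import Mathlib

section
/- Assume that add(N) = cof(N), where N is the class of Lebesgue null subsets of [0,1]. Then there exists a monotone G_δ hull operation on N, i.e. a map φ : N → P([0,1]) such that for every A ∈ N the set φ(A) is a G_δ subset of [0,1] containing A with λ*(φ(A)) = λ*(A), and A ⊆ A' implies φ(A) ⊆ φ(A'). -/
open MeasureTheory Set

noncomputable section

/-- The class of Lebesgue null subsets of `[0,1]`. -/
def NullSets : Set (Set ℝ) := {A | A ⊆ Icc (0:ℝ) 1 ∧ volume A = 0}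

/-- `φ` is a monotone hull operation on the class `D ⊆ 𝒫([0,1])`, where the hulls are
required to satisfy the predicate `Good` (e.g. Borel or Gδ). Here `volume` applied to an
arbitrary set is the Lebesgue outer measure. -/
def IsMonotoneHullOn (D : Set (Set ℝ)) (Good : Set ℝ → Prop) (φ : Set ℝ → Set ℝ) : Prop :=
  (∀ A ∈ D, Good (φ A) ∧ φ A ⊆ Icc (0:ℝ) 1 ∧ A ⊆ φ A ∧ volume (φ A) = volume A) ∧
  ∀ A ∈ D, ∀ A' ∈ D, A ⊆ A' → φ A ⊆ φ A'

/-- `add(N)`: the least cardinality of a family of null subsets of `[0,1]` whose union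
is not null. -/
def addNull : Cardinal :=
  sInf { c | ∃ F : Set (Set ℝ), (∀ A ∈ F, A ∈ NullSets) ∧ volume (⋃₀ F) ≠ 0 ∧
    c = Cardinal.mk F }

/-- `cof(N)`: the least cardinality of a cofinal family of null subsets of `[0,1]`. -/
def cofNull : Cardinal :=
  sInf { c | ∃ F : Set (Set ℝ), (∀ A ∈ F, A ∈ NullSets) ∧
    (∀ N ∈ NullSets, ∃ A ∈ F, N ⊆ A) ∧ c = Cardinal.mk F }


/-! Enumerate a cofinal family of null sets as `B α`, `α < κ = cof(N)`, and build by transfinite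
recursion an increasing chain of Gδ null sets `H α ⊇ B α`, taking for `H α` a Gδ null hull of
`⋃_{β<α} H β ∪ B α`; this set is null because, as `κ = add(N)`, it is a union of fewer than
`add(N)` null sets. The chain is cofinal in `N`, so `A ↦ H (min {α | A ⊆ H α})` is a monotone
Gδ hull operation. -/

open scoped ENNReal Cardinal

theorem MeasureTheory.Measure.exists_isGδ_superset_of_null {X : Type*} [TopologicalSpace X]
    [MeasurableSpace X] (μ : Measure X) [μ.OuterRegular] {A : Set X} (hA : μ A = 0) :
    ∃ G, IsGδ G ∧ A ⊆ G ∧ μ G = 0 := by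
  have hU : ∀ n : ℕ, ∃ U ⊇ A, IsOpen U ∧ μ U < (n : ℝ≥0∞)⁻¹ :=
    fun n => A.exists_isOpen_lt_of_lt _ (by simp [hA])
  choose U hAU hUo hμU using hU
  refine ⟨⋂ n, U n, .iInter_of_isOpen hUo, subset_iInter hAU, ?_⟩
  by_contra hne
  obtain ⟨n, hn⟩ := ENNReal.exists_inv_nat_lt hne
  exact lt_asymm (hn.trans_le (measure_mono (iInter_subset U n))) (hμU n)

theorem exists_isGδ_hull_nullSets : ∃ hull : Set ℝ → Set ℝ,
    (∀ A, IsGδ (hull A) ∧ hull A ∈ NullSets) ∧ ∀ A ∈ NullSets, A ⊆ hull A := by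
  have hG : ∀ A : Set ℝ, ∃ G, (IsGδ G ∧ G ∈ NullSets) ∧ (A ∈ NullSets → A ⊆ G) := by
    intro A
    by_cases hA : A ∈ NullSets
    · obtain ⟨G, hGδ, hAG, hG0⟩ := volume.exists_isGδ_superset_of_null hA.2
      exact ⟨G ∩ Icc 0 1, ⟨hGδ.inter isClosed_Icc.isGδ, inter_subset_right,
        measure_mono_null inter_subset_left hG0⟩, fun _ => subset_inter hAG hA.1⟩
    · exact ⟨∅, ⟨.empty, empty_subset _, measure_empty⟩, fun h => absurd h hA⟩
  choose hull hhull using hG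
  exact ⟨hull, fun A => (hhull A).1, fun A => (hhull A).2⟩

theorem iUnion_mem_nullSets_of_mk_lt_addNull {ι : Type} {f : ι → Set ℝ}
    (hf : ∀ i, f i ∈ NullSets) (hι : #ι < addNull) : ⋃ i, f i ∈ NullSets := by
  refine ⟨iUnion_subset fun i => (hf i).1, ?_⟩
  by_contra hne
  have : addNull ≤ #(range f) :=
    csInf_le' ⟨range f, forall_mem_range.2 hf, by rwa [sUnion_range], rfl⟩
  exact (this.trans Cardinal.mk_range_le).not_gt hι

theorem exists_cofinal_nullSets_mk_eq_cofNull : ∃ F : Set (Set ℝ), (∀ A ∈ F, A ∈ NullSets) ∧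
    (∀ N ∈ NullSets, ∃ A ∈ F, N ⊆ A) ∧ cofNull = #F :=
  csInf_mem (s := {c | ∃ F : Set (Set ℝ), (∀ A ∈ F, A ∈ NullSets) ∧
    (∀ N ∈ NullSets, ∃ A ∈ F, N ⊆ A) ∧ c = #F})
    ⟨#NullSets, NullSets, fun _ hA => hA, fun N hN => ⟨N, hN, subset_rfl⟩, rfl⟩

section HullTower

variable {α ι : Type*} [LinearOrder ι] [WellFoundedLT ι]

def hullTower (hull : Set α → Set α) (e : ι → Set α) : ι → Set α :=
  wellFounded_lt.fix fun i T => hull ((⋃ j : Iio i, T j j.2) ∪ e i)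

theorem hullTower_eq (hull : Set α → Set α) (e : ι → Set α) (i : ι) :
    hullTower hull e i = hull ((⋃ j : Iio i, hullTower hull e j) ∪ e i) :=
  wellFounded_lt.fix_eq _ i

theorem monotone_hullTower {hull : Set α → Set α} {e : ι → Set α}
    (h : ∀ i, (⋃ j : Iio i, hullTower hull e j) ⊆ hullTower hull e i) :
    Monotone (hullTower hull e) := by
  intro j i hji
  rcases hji.eq_or_lt with rfl | hji
  · exact subset_rfl
  · exact (subset_iUnion (fun k : Iio i => hullTower hull e k) ⟨j, hji⟩).trans (h i)

end HullTower

theorem exists_monotone_isGδ_nullSets_supersets {ι : Type} [LinearOrder ι] [WellFoundedLT ι]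
    (hι : ∀ i : ι, #(Iio i) < addNull) {e : ι → Set ℝ} (he : ∀ i, e i ∈ NullSets) :
    ∃ H : ι → Set ℝ, Monotone H ∧ (∀ i, IsGδ (H i) ∧ H i ∈ NullSets) ∧ ∀ i, e i ⊆ H i := by
  obtain ⟨hull, hhull, hsub⟩ := exists_isGδ_hull_nullSets
  have hH : ∀ i, IsGδ (hullTower hull e i) ∧ hullTower hull e i ∈ NullSets := fun i => by
    rw [hullTower_eq]; exact hhull _
  have hstep : ∀ i, (⋃ j : Iio i, hullTower hull e j) ∪ e i ⊆ hullTower hull e i := by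
    intro i
    have hprev := iUnion_mem_nullSets_of_mk_lt_addNull (fun j : Iio i => (hH j).2) (hι i)
    rw [hullTower_eq]
    exact hsub _ ⟨union_subset hprev.1 (he i).1, measure_union_null hprev.2 (he i).2⟩
  exact ⟨hullTower hull e, monotone_hullTower fun i => subset_union_left.trans (hstep i), hH,
    fun i => subset_union_right.trans (hstep i)⟩

theorem exists_monotone_cofinal_isGδ_nullSets_of_addNull_eq_cofNull (h : addNull = cofNull) :
    ∃ H : cofNull.ord.ToType → Set ℝ, Monotone H ∧ (∀ i, IsGδ (H i) ∧ H i ∈ NullSets) ∧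
      ∀ A ∈ NullSets, ∃ i, A ⊆ H i := by
  obtain ⟨F, hFnull, hFcof, hFcard⟩ := exists_cofinal_nullSets_mk_eq_cofNull
  obtain ⟨e⟩ : Nonempty (cofNull.ord.ToType ≃ F) := by
    rw [← Cardinal.eq, Cardinal.mk_toType, Cardinal.card_ord, hFcard]
  obtain ⟨H, hmono, hH, heH⟩ := exists_monotone_isGδ_nullSets_supersets
    (fun i => by simpa [h] using Cardinal.mk_Iio_lt i) (fun i => hFnull _ (e i).2)
  refine ⟨H, hmono, hH, fun A hA => ?_⟩
  obtain ⟨B, hBF, hAB⟩ := hFcof A hA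
  refine ⟨e.symm ⟨B, hBF⟩, hAB.trans ?_⟩
  simpa using heH (e.symm ⟨B, hBF⟩)

theorem exists_isMonotoneHullOn_nullSets_of_monotone_cofinal {ι : Type*} [LinearOrder ι]
    [WellFoundedLT ι] {Good : Set ℝ → Prop} {H : ι → Set ℝ} (hmono : Monotone H)
    (hH : ∀ i, Good (H i) ∧ H i ∈ NullSets) (hcof : ∀ A ∈ NullSets, ∃ i, A ⊆ H i) :
    ∃ φ : Set ℝ → Set ℝ, IsMonotoneHullOn NullSets Good φ := by
  classical
  refine ⟨fun A => if hA : ∃ i, A ⊆ H i then H (wellFounded_lt.min {i | A ⊆ H i} hA) else ∅,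
    fun A hA => ?_, fun A hA A' hA' hAA' => ?_⟩
  · have hAi := hcof A hA
    dsimp only
    rw [dif_pos hAi]
    refine ⟨(hH _).1, (hH _).2.1, wellFounded_lt.min_mem _ hAi, ?_⟩
    rw [(hH _).2.2, hA.2]
  · have hAi := hcof A hA
    have hA'i := hcof A' hA'
    dsimp only
    rw [dif_pos hAi, dif_pos hA'i]
    exact hmono (wellFounded_lt.min_le (s := {i | A ⊆ H i})
      (hAA'.trans (wellFounded_lt.min_mem {i | A' ⊆ H i} hA'i)))

/-- Assume `add(N) = cof(N)`. Then there exists a monotone Gδ hull operation on `N`. -/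
theorem monotone_Gdelta_hull_on_null_of_add_eq_cof (h : addNull = cofNull) :
    ∃ φ : Set ℝ → Set ℝ, IsMonotoneHullOn NullSets IsGδ φ := by
  obtain ⟨H, hmono, hH, hcof⟩ := exists_monotone_cofinal_isGδ_nullSets_of_addNull_eq_cofNull h
  exact exists_isMonotoneHullOn_nullSets_of_monotone_cofinal hmono hH hcof
end
end

section
/- Assume that add(N) = cof(N), where N is the class of Lebesgue null subsets of [0,1]. Then there exists a monotone Borel hull operation on N, i.e. a map φ : N → P([0,1]) such that for every A ∈ N the set φ(A) is a Borel subset of [0,1] containing A with λ*(φ(A)) = λ*(A), and A ⊆ A' implies φ(A) ⊆ φ(A'). -/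
open MeasureTheory Set

noncomputable section

/-! Enumerate a cofinal family of null sets of size `cof(N)` in order type `cof(N)` and replace
its `i`-th member by a Borel null hull of it together with all earlier hulls. Every initial
segment has fewer than `cof(N) = add(N)` members, so the hulls stay null, and they increase with
`i`. A null set `A` is then sent to the first hull containing `A`; monotonicity of the hulls
makes this monotone in `A`. -/

def unitHull (S : Set ℝ) : Set ℝ := toMeasurable volume S ∩ Icc 0 1

lemma measurableSet_unitHull (S : Set ℝ) : MeasurableSet (unitHull S) :=
  (measurableSet_toMeasurable _ _).inter measurableSet_Icc

lemma unitHull_subset_Icc (S : Set ℝ) : unitHull S ⊆ Icc 0 1 := inter_subset_right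

lemma subset_unitHull {S T : Set ℝ} (hTS : T ⊆ S) (hT : T ⊆ Icc 0 1) : T ⊆ unitHull S :=
  subset_inter (hTS.trans (subset_toMeasurable _ _)) hT

lemma unitHull_mem_nullSets {S : Set ℝ} (hS : volume S = 0) : unitHull S ∈ NullSets :=
  ⟨unitHull_subset_Icc S, measure_mono_null inter_subset_left (by rwa [measure_toMeasurable])⟩

lemma volume_iUnion_eq_zero_of_mk_lt_addNull {α : Type} {g : α → Set ℝ}
    (hg : ∀ a, g a ∈ NullSets) (hα : Cardinal.mk α < addNull) : volume (⋃ a, g a) = 0 := by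
  by_contra hvol
  have hle : addNull ≤ Cardinal.mk (range g) :=
    csInf_le (OrderBot.bddBelow _) ⟨range g, by simpa using hg, by rwa [sUnion_range], rfl⟩
  exact (hle.trans Cardinal.mk_range_le).not_gt hα

lemma exists_cofinal_nullSets_indexed_by_cofNull :
    ∃ B : cofNull.ord.ToType → Set ℝ, (∀ i, B i ∈ NullSets) ∧ ∀ A ∈ NullSets, ∃ i, A ⊆ B i := by
  obtain ⟨F, hFnull, hFcof, hFcard⟩ : cofNull ∈ _ :=
    csInf_mem ⟨_, NullSets, fun _ hA => hA, fun N hN => ⟨N, hN, subset_rfl⟩, rfl⟩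
  obtain ⟨e⟩ := Cardinal.eq.mp (by rw [Cardinal.mk_ord_toType, hFcard] :
    Cardinal.mk cofNull.ord.ToType = Cardinal.mk F)
  refine ⟨fun i => e i, fun i => hFnull _ (e i).2, fun A hA => ?_⟩
  obtain ⟨A', hA'F, hAA'⟩ := hFcof A hA
  exact ⟨e.symm ⟨A', hA'F⟩, by simpa using hAA'⟩

section Chain

variable {ι : Type} [LinearOrder ι] [WellFoundedLT ι]

def hullChain (B : ι → Set ℝ) : ι → Set ℝ :=
  WellFoundedLT.fix fun i rec => unitHull (B i ∪ ⋃ j : Iio i, rec j j.2)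

lemma hullChain_eq (B : ι → Set ℝ) (i : ι) :
    hullChain B i = unitHull (B i ∪ ⋃ j : Iio i, hullChain B j) :=
  WellFoundedLT.fix_eq _ i

lemma measurableSet_hullChain (B : ι → Set ℝ) (i : ι) : MeasurableSet (hullChain B i) := by
  rw [hullChain_eq]; exact measurableSet_unitHull _

lemma hullChain_subset_Icc (B : ι → Set ℝ) (i : ι) : hullChain B i ⊆ Icc 0 1 := by
  rw [hullChain_eq]; exact unitHull_subset_Icc _

lemma subset_hullChain {B : ι → Set ℝ} (hB : ∀ i, B i ⊆ Icc 0 1) (i : ι) :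
    B i ⊆ hullChain B i := by
  rw [hullChain_eq]; exact subset_unitHull subset_union_left (hB i)

lemma monotone_hullChain (B : ι → Set ℝ) : Monotone (hullChain B) := by
  intro j i hji
  rcases hji.eq_or_lt with rfl | hlt
  · exact subset_rfl
  rw [hullChain_eq B i]
  refine subset_unitHull ?_ (hullChain_subset_Icc B j)
  exact subset_union_of_subset_right (subset_iUnion (fun k : Iio i => hullChain B k) ⟨j, hlt⟩) _

lemma hullChain_mem_nullSets {B : ι → Set ℝ} (hB : ∀ i, B i ∈ NullSets)
    (hsmall : ∀ i : ι, Cardinal.mk (Iio i) < addNull) (i : ι) : hullChain B i ∈ NullSets := by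
  induction i using WellFoundedLT.induction with
  | ind i ih =>
    rw [hullChain_eq]
    refine unitHull_mem_nullSets (measure_union_null (hB i).2 ?_)
    exact volume_iUnion_eq_zero_of_mk_lt_addNull (fun j : Iio i => ih j j.2) (hsmall i)

open scoped Classical in
def firstCover (C : ι → Set ℝ) (A : Set ℝ) : Set ℝ :=
  if h : ∃ i, A ⊆ C i then C (wellFounded_lt.min {i | A ⊆ C i} h) else ∅

lemma exists_firstCover_eq {C : ι → Set ℝ} {A : Set ℝ} (h : ∃ i, A ⊆ C i) :
    ∃ i, firstCover C A = C i ∧ A ⊆ C i := by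
  rw [firstCover, dif_pos h]
  exact ⟨_, rfl, wellFounded_lt.min_mem {i | A ⊆ C i} h⟩

lemma firstCover_mono {C : ι → Set ℝ} (hC : Monotone C) {A A' : Set ℝ} (hAA' : A ⊆ A')
    (h' : ∃ i, A' ⊆ C i) : firstCover C A ⊆ firstCover C A' := by
  have h : ∃ i, A ⊆ C i := h'.imp fun _ => hAA'.trans
  rw [firstCover, firstCover, dif_pos h, dif_pos h']
  exact hC <| (wellFounded_lt (α := ι)).min_le <|
    hAA'.trans (wellFounded_lt.min_mem {i | A' ⊆ C i} h')

lemma isMonotoneHullOn_firstCover {Good : Set ℝ → Prop} {C : ι → Set ℝ} (hC : Monotone C)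
    (hgood : ∀ i, Good (C i)) (hnull : ∀ i, C i ∈ NullSets)
    (hcof : ∀ A ∈ NullSets, ∃ i, A ⊆ C i) : IsMonotoneHullOn NullSets Good (firstCover C) := by
  refine ⟨fun A hA => ?_, fun A _ A' hA' hAA' => firstCover_mono hC hAA' (hcof A' hA')⟩
  obtain ⟨i, hi, hAi⟩ := exists_firstCover_eq (hcof A hA)
  rw [hi, (hnull i).2, hA.2]
  exact ⟨hgood i, (hnull i).1, hAi, rfl⟩

end Chain

/-- Assume `add(N) = cof(N)`. Then there exists a monotone Borel hull operation on `N`.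
(On `ℝ`, `MeasurableSet` is the Borel σ-algebra.) -/
theorem monotone_borel_hull_on_null_of_add_eq_cof (h : addNull = cofNull) :
    ∃ φ : Set ℝ → Set ℝ, IsMonotoneHullOn NullSets MeasurableSet φ := by
  obtain ⟨B, hBnull, hBcof⟩ := exists_cofinal_nullSets_indexed_by_cofNull
  have hsmall (i : cofNull.ord.ToType) : Cardinal.mk (Iio i) < addNull := by
    simpa [h] using Cardinal.mk_Iio_lt i (by simp)
  refine ⟨firstCover (hullChain B), isMonotoneHullOn_firstCover (monotone_hullChain B)
    (measurableSet_hullChain B) (hullChain_mem_nullSets hBnull hsmall) fun A hA => ?_⟩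
  obtain ⟨i, hAi⟩ := hBcof A hA
  exact ⟨i, hAi.trans (subset_hullChain (fun j => (hBnull j).1) i)⟩
end
end

section
/- Suppose that non(N) = ℵ₂ and that there exists a monotone Borel hull operation on N. Then there exists a family (B_α)_{α < ω₂} of Borel subsets of [0,1], indexed by the ordinals below ω₂, which is strictly increasing with respect to inclusion: α < β < ω₂ implies B_α ⊊ B_β. -/
open MeasureTheory Set

noncomputable section

/-- `non(N)`: the least cardinality of a non-null subset of `[0,1]`. -/
def nonNull : Cardinal :=
  sInf { c | ∃ A : Set ℝ, A ⊆ Icc (0:ℝ) 1 ∧ volume A ≠ 0 ∧ c = Cardinal.mk A }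

/-!
Transfinite recursion of length `ω₂ = non(N)`: at stage `α` the points `x β` (`β < α`) chosen so
far form a set of size `< non(N)`, hence a null set, so its hull `φ {x β | β < α}` is null and
misses some point `x α ∈ [0,1]`. The hulls `B α := φ {x β | β < α}` increase by monotonicity of
`φ`, and strictly so, since `x α ∈ B β \ B α` for `α < β`.
-/

open Cardinal

universe u

theorem mem_nullSets_of_mk_lt_nonNull {A : Set ℝ} (hA : A ⊆ Icc 0 1) (hcard : #A < nonNull) :
    A ∈ NullSets := by
  refine ⟨hA, by_contra fun hne => hcard.not_ge ?_⟩
  exact csInf_le' ⟨A, hA, hne, rfl⟩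

theorem exists_mem_Icc_notMem_of_volume_eq_zero {H : Set ℝ} (hH : volume H = 0) :
    ∃ r, r ∈ Icc (0 : ℝ) 1 \ H := by
  by_contra! h
  have hsub : Icc (0 : ℝ) 1 ⊆ H := fun r hr => by_contra fun hrH => h r ⟨hr, hrH⟩
  have := measure_mono_null hsub hH
  simp at this

theorem mk_image_Iio_lt {X : Type} (x : Ordinal.{u} → X) {c : Cardinal.{0}} {α : Ordinal.{u}}
    (hα : α < (lift.{u} c).ord) : #(x '' Iio α) < c := by
  have hle := mk_image_le_lift (f := x) (s := Iio α)
  rw [Cardinal.mk_Iio_ordinal, lift_lift] at hle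
  have hlt : lift.{u + 1} α.card < lift.{u + 1} (lift.{u} c) := lift_lt.mpr (lt_ord.mp hα)
  rw [lift_lift] at hlt
  exact lift_lt.mp (hle.trans_lt hlt)

/-- A point of `[0,1] \ H`, whenever there is one. -/
def pointOutside (H : Set ℝ) : ℝ :=
  Classical.epsilon (· ∈ Icc (0 : ℝ) 1 \ H)

theorem pointOutside_mem {H : Set ℝ} (hH : volume H = 0) : pointOutside H ∈ Icc (0 : ℝ) 1 \ H :=
  Classical.epsilon_spec (exists_mem_Icc_notMem_of_volume_eq_zero hH)

def hullSeq (φ : Set ℝ → Set ℝ) : Ordinal.{u} → ℝ :=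
  Ordinal.lt_wf.fix fun α x => pointOutside (φ (range fun β : Iio α => x β β.2))

theorem hullSeq_eq (φ : Set ℝ → Set ℝ) (α : Ordinal.{u}) :
    hullSeq φ α = pointOutside (φ (hullSeq φ '' Iio α)) := by
  rw [hullSeq, Ordinal.lt_wf.fix_eq, ← image_eq_range]

section HullChain

variable {φ : Set ℝ → Set ℝ} (hφ : IsMonotoneHullOn NullSets MeasurableSet φ)
include hφ

theorem hullSeq_mem_Icc_diff {α : Ordinal.{u}} (hα : α < (lift.{u} nonNull).ord) :
    hullSeq φ α ∈ Icc (0 : ℝ) 1 \ φ (hullSeq φ '' Iio α) := by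
  induction α using WellFoundedLT.induction with
  | _ α ih =>
    have hsub : hullSeq φ '' Iio α ⊆ Icc 0 1 := by
      rintro _ ⟨β, hβ, rfl⟩
      exact (ih β hβ (hβ.trans hα)).1
    have hnull := mem_nullSets_of_mk_lt_nonNull hsub (mk_image_Iio_lt _ hα)
    obtain ⟨-, -, -, hvol⟩ := hφ.1 _ hnull
    rw [hullSeq_eq]
    exact pointOutside_mem (hvol.trans hnull.2)

theorem image_Iio_hullSeq_mem_nullSets {α : Ordinal.{u}} (hα : α < (lift.{u} nonNull).ord) :
    hullSeq φ '' Iio α ∈ NullSets := by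
  refine mem_nullSets_of_mk_lt_nonNull ?_ (mk_image_Iio_lt _ hα)
  rintro _ ⟨β, hβ, rfl⟩
  exact (hullSeq_mem_Icc_diff hφ (hβ.trans hα)).1

theorem strictMonoOn_hull_image_Iio_hullSeq :
    StrictMonoOn (fun α : Ordinal.{u} => φ (hullSeq φ '' Iio α)) (Iio (lift.{u} nonNull).ord) := by
  intro α hα β hβ hαβ
  have hαN := image_Iio_hullSeq_mem_nullSets hφ hα
  have hβN := image_Iio_hullSeq_mem_nullSets hφ hβ
  refine ssubset_of_subset_not_subset
    (hφ.2 _ hαN _ hβN (image_mono (Iio_subset_Iio hαβ.le))) fun hβα => ?_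
  have hmem : hullSeq φ α ∈ φ (hullSeq φ '' Iio β) := (hφ.1 _ hβN).2.2.1 ⟨α, hαβ, rfl⟩
  exact (hullSeq_mem_Icc_diff hφ hα).2 (hβα hmem)

end HullChain

theorem ord_aleph_two_eq_ord_lift_nonNull (hnon : nonNull = aleph 2) :
    (aleph.{u} 2).ord = (lift.{u} nonNull).ord := by
  rw [hnon, lift_aleph, Ordinal.lift_ofNat]

/-- If `non(N) = ℵ₂` and there is a monotone Borel hull operation on `N`, then there is a
strictly increasing (w.r.t. inclusion) `ω₂`-indexed family of Borel subsets of `[0,1]`. -/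
theorem strict_chain_of_borel_hull_of_non_eq_aleph_two
    (hnon : nonNull = Cardinal.aleph 2)
    (hhull : ∃ φ : Set ℝ → Set ℝ, IsMonotoneHullOn NullSets MeasurableSet φ) :
    ∃ B : Ordinal → Set ℝ,
      (∀ α, α < (Cardinal.aleph 2).ord → MeasurableSet (B α) ∧ B α ⊆ Icc (0:ℝ) 1) ∧
      (∀ α β, α < β → β < (Cardinal.aleph 2).ord → B α ⊂ B β) := by
  obtain ⟨φ, hφ⟩ := hhull
  have hω₂ := ord_aleph_two_eq_ord_lift_nonNull hnon
  refine ⟨fun α => φ (hullSeq φ '' Iio α), fun α hα => ?_, fun α β hαβ hβ => ?_⟩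
  · rw [hω₂] at hα
    obtain ⟨hmeas, hsub, -⟩ := hφ.1 _ (image_Iio_hullSeq_mem_nullSets hφ hα)
    exact ⟨hmeas, hsub⟩
  · rw [hω₂] at hβ
    exact strictMonoOn_hull_image_Iio_hullSeq hφ (hαβ.trans hβ) hβ hαβ
end
end

section
/- Let H ⊆ ℝ be arbitrary and let cl_d(H) denote the closure of H in the density topology of ℝ. Then every Lebesgue measurable subset of cl_d(H) \ H is Lebesgue null; in particular, cl_d(H) is a hull of H. -/
open MeasureTheory Set Filter

noncomputable section

/-- A set `U ⊆ ℝ` is open in the density topology: it is Lebesgue measurable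
(i.e. measurable w.r.t. the completion of the Borel σ-algebra, expressed via
`NullMeasurableSet`) and every point of `U` is a Lebesgue density point of `U`. -/
def DensityOpen (U : Set ℝ) : Prop :=
  NullMeasurableSet U volume ∧ ∀ x ∈ U,
    Tendsto (fun r : ℝ => volume (U ∩ Icc (x - r) (x + r)) / ENNReal.ofReal (2 * r))
      (nhdsWithin 0 (Ioi 0)) (nhds 1)

/-- The closure of `H` in the density topology: the smallest density-closed set
containing `H`. -/
def densityClosure (H : Set ℝ) : Set ℝ :=
  ⋂₀ {F | DensityOpen Fᶜ ∧ H ⊆ F}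

/-!
By the Lebesgue density theorem, almost every point of a measurable set `L` is a density point of
`L`, and the density points of `L` that lie in `L` form a density-open set `V` differing from `L`
by a null set. If `L ⊆ cl_d(H) \ H`, then `V` is a density-open set disjoint from `H`, hence
disjoint from `cl_d(H)`; since also `V ⊆ cl_d(H)`, `V` is empty and `L` is null.
-/

open Topology

def densityPoints (S : Set ℝ) : Set ℝ :=
  {x | Tendsto (fun r : ℝ => volume (S ∩ Icc (x - r) (x + r)) / ENNReal.ofReal (2 * r))
    (𝓝[>] 0) (𝓝 1)}

theorem densityOpen_iff {U : Set ℝ} :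
    DensityOpen U ↔ NullMeasurableSet U volume ∧ U ⊆ densityPoints U :=
  Iff.rfl

theorem densityPoints_congr_ae {S T : Set ℝ} (h : S =ᵐ[volume] T) :
    densityPoints S = densityPoints T := by
  have inter_eq (A : Set ℝ) : volume (S ∩ A) = volume (T ∩ A) :=
    measure_congr (h.inter EventuallyEq.rfl)
  simp only [densityPoints, inter_eq]

theorem ae_restrict_mem_densityPoints (S : Set ℝ) :
    ∀ᵐ x ∂volume.restrict S, x ∈ densityPoints S := by
  filter_upwards [Besicovitch.ae_tendsto_measure_inter_div volume S] with x hx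
  have ball_eq (r : ℝ) : volume (S ∩ Metric.closedBall x r) / volume (Metric.closedBall x r)
      = volume (S ∩ Icc (x - r) (x + r)) / ENNReal.ofReal (2 * r) := by
    rw [Real.closedBall_eq_Icc, Real.volume_Icc]
    ring_nf
  simpa only [densityPoints, mem_ofPred_eq, ball_eq] using hx

theorem volume_diff_densityPoints (S : Set ℝ) : volume (S \ densityPoints S) = 0 :=
  measure_mono_null (fun _ hx => (⟨hx.2, hx.1⟩ : _ ∈ _ ∩ S)) <|
    nonpos_iff_eq_zero.1 <| (Measure.le_restrict_apply S _).trans_eq <|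
      ae_iff.1 (ae_restrict_mem_densityPoints S)

theorem inter_densityPoints_ae_eq (S : Set ℝ) : (S ∩ densityPoints S : Set ℝ) =ᵐ[volume] S :=
  ae_eq_set.2 ⟨by rw [sdiff_eq_bot_iff.2 inter_subset_left]; exact measure_empty,
    by rw [sdiff_self_inter]; exact volume_diff_densityPoints S⟩

theorem densityOpen_inter_densityPoints {S : Set ℝ} (hS : NullMeasurableSet S volume) :
    DensityOpen (S ∩ densityPoints S) :=
  densityOpen_iff.2 ⟨hS.congr (inter_densityPoints_ae_eq S).symm, by
    rw [densityPoints_congr_ae (inter_densityPoints_ae_eq S)]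
    exact inter_subset_right⟩

theorem subset_densityClosure (H : Set ℝ) : H ⊆ densityClosure H :=
  fun _ hx _ hF => hF.2 hx

theorem disjoint_densityClosure_of_densityOpen {U H : Set ℝ} (hU : DensityOpen U)
    (hUH : Disjoint U H) : Disjoint U (densityClosure H) :=
  disjoint_left.2 fun _ hxU hxcl => hxcl Uᶜ ⟨by rwa [compl_compl], hUH.subset_compl_left⟩ hxU

theorem eq_empty_of_densityOpen_subset_densityClosure_diff {U H : Set ℝ} (hU : DensityOpen U)
    (hUH : U ⊆ densityClosure H \ H) : U = ∅ := by
  have hdisj : Disjoint U (densityClosure H) :=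
    disjoint_densityClosure_of_densityOpen hU (disjoint_left.2 fun _ hx => (hUH hx).2)
  exact hdisj.eq_bot_of_le fun _ hx => (hUH hx).1

/-- For every `H ⊆ ℝ`, the density-topology closure of `H` is a hull of `H`:
it contains `H`, and every Lebesgue measurable subset of `cl_d(H) \ H` is null. -/
theorem densityClosure_is_hull (H : Set ℝ) :
    H ⊆ densityClosure H ∧
    ∀ L : Set ℝ, NullMeasurableSet L volume → L ⊆ densityClosure H \ H →
      volume L = 0 := by
  refine ⟨subset_densityClosure H, fun L hL hLH => ?_⟩
  have hV : L ∩ densityPoints L = ∅ :=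
    eq_empty_of_densityOpen_subset_densityClosure_diff (densityOpen_inter_densityPoints hL)
      (inter_subset_left.trans hLH)
  rw [← measure_congr (inter_densityPoints_ae_eq L), hV, measure_empty]
end
end

section
/- There exists a monotone Borel hull operation on P([0,1]) (the class of all subsets of [0,1]) if and only if there exists a monotone Borel hull operation on L, the class of Lebesgue measurable subsets of [0,1]. -/
open MeasureTheory Set

noncomputable section

/-- The class of Lebesgue measurable subsets of `[0,1]` (Lebesgue measurable =
measurable w.r.t. the completion of the Borel σ-algebra, i.e. `NullMeasurableSet`). -/
def LebSets : Set (Set ℝ) := {A | A ⊆ Icc (0:ℝ) 1 ∧ NullMeasurableSet A volume}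

/-- The class of all subsets of `[0,1]`. -/
def AllSets : Set (Set ℝ) := {A | A ⊆ Icc (0:ℝ) 1}

/-!
The measurable hull `toMeasurable μ A` is not monotone in `A`, but the set of Lebesgue density
points of `A` is: it is Borel, it only depends on `A` through its outer measure on balls, and by
the Lebesgue density theorem it agrees a.e. with `toMeasurable μ A`. Hence `A ∪ densityPoints A`
is a monotone Lebesgue measurable hull of `A`, and precomposing a monotone Borel hull operation
on measurable sets with it gives one on all sets.
-/

open Metric Filter Topology

namespace MeasureTheory

section DensityPoints

variable {α : Type*} [MetricSpace α] [MeasurableSpace α]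

/-- Radii run along `1 / (n + 1)` rather than `𝓝[>] 0` so that the set is Borel for every `A`. -/
def densityPoints (μ : Measure α) (A : Set α) : Set α :=
  {x | Tendsto
    (fun n : ℕ => μ (A ∩ closedBall x (1 / (n + 1 : ℝ))) / μ (closedBall x (1 / (n + 1 : ℝ))))
    atTop (𝓝 1)}

theorem densityPoints_mono (μ : Measure α) : Monotone (densityPoints μ) := by
  intro A B hAB x hx
  refine tendsto_of_tendsto_of_tendsto_of_le_of_le hx tendsto_const_nhds
    (fun n => ENNReal.div_le_div_right (measure_mono (inter_subset_inter_left _ hAB)) _)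
    (fun n => ENNReal.div_le_of_le_mul ?_)
  rw [one_mul]
  exact measure_mono inter_subset_right

variable [OpensMeasurableSpace α]

theorem densityPoints_toMeasurable (μ : Measure α) [SFinite μ] (A : Set α) :
    densityPoints μ (toMeasurable μ A) = densityPoints μ A := by
  simp only [densityPoints, Measure.measure_toMeasurable_inter_of_sFinite measurableSet_closedBall]

variable [SecondCountableTopology α]

theorem measurable_measure_inter_closedBall (μ : Measure α) [SFinite μ] {H : Set α}
    (hH : MeasurableSet H) (r : ℝ) : Measurable fun x => μ (H ∩ closedBall x r) := by
  have hS : MeasurableSet {p : α × α | p.2 ∈ H ∧ dist p.2 p.1 ≤ r} :=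
    (hH.preimage measurable_snd).inter
      (measurableSet_le (continuous_snd.dist continuous_fst).measurable measurable_const)
  convert measurable_measure_prodMk_left (ν := μ) hS using 3 with x
  ext y
  simp [mem_closedBall]

theorem measurableSet_densityPoints (μ : Measure α) [SFinite μ] (A : Set α) :
    MeasurableSet (densityPoints μ A) := by
  rw [← densityPoints_toMeasurable]
  exact measurableSet_tendsto _ fun n =>
    (measurable_measure_inter_closedBall μ (measurableSet_toMeasurable μ A) _).div
      (by simpa using measurable_measure_inter_closedBall μ MeasurableSet.univ _)

end DensityPoints

section Besicovitch

variable {α : Type*} [MetricSpace α] [MeasurableSpace α] [BorelSpace α]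
  [SecondCountableTopology α] [HasBesicovitchCovering α]
  (μ : Measure α) [IsLocallyFiniteMeasure μ]

theorem densityPoints_ae_eq_of_measurableSet {H : Set α} (hH : MeasurableSet H) :
    densityPoints μ H =ᵐ[μ] H := by
  have hradii : Tendsto (fun n : ℕ => 1 / (n + 1 : ℝ)) atTop (𝓝[>] 0) :=
    tendsto_nhdsWithin_of_tendsto_nhds_of_eventually_within _
      tendsto_one_div_add_atTop_nhds_zero_nat
      (Eventually.of_forall fun n => mem_Ioi.2 (by positivity))
  rw [eventuallyEq_set]
  filter_upwards [Besicovitch.ae_tendsto_measure_inter_div_of_measurableSet μ hH] with x hx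
  have hlim := hx.comp hradii
  by_cases hxH : x ∈ H
  · simp only [indicator_of_mem hxH, Pi.one_apply] at hlim
    exact iff_of_true hlim hxH
  · simp only [indicator_of_notMem hxH] at hlim
    exact iff_of_false (fun h => zero_ne_one (tendsto_nhds_unique hlim h)) hxH

theorem densityPoints_ae_eq_toMeasurable (A : Set α) :
    densityPoints μ A =ᵐ[μ] toMeasurable μ A := by
  rw [← densityPoints_toMeasurable]
  exact densityPoints_ae_eq_of_measurableSet μ (measurableSet_toMeasurable μ A)

theorem exists_monotone_nullMeasurableSet_hull :
    ∃ M : Set α → Set α, Monotone M ∧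
      ∀ A, A ⊆ M A ∧ NullMeasurableSet (M A) μ ∧ μ (M A) = μ A := by
  refine ⟨fun A => A ∪ densityPoints μ A,
    fun A B hAB => union_subset_union hAB (densityPoints_mono μ hAB), fun A => ?_⟩
  have hD := densityPoints_ae_eq_toMeasurable μ A
  have hnull : μ (A \ densityPoints μ A) = 0 :=
    measure_mono_null (sdiff_subset_sdiff_left (subset_toMeasurable μ A)) (ae_eq_set.1 hD).2
  have hsplit : A ∪ densityPoints μ A = densityPoints μ A ∪ (A \ densityPoints μ A) := by
    rw [union_sdiff_self, union_comm]
  refine ⟨subset_union_left, ?_, le_antisymm ?_ (measure_mono subset_union_left)⟩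
  · dsimp only
    rw [hsplit]
    exact (measurableSet_densityPoints μ A).nullMeasurableSet.union (.of_null hnull)
  · calc μ (A ∪ densityPoints μ A)
        = μ (densityPoints μ A ∪ (A \ densityPoints μ A)) := by rw [← hsplit]
      _ ≤ μ (densityPoints μ A) + μ (A \ densityPoints μ A) := measure_union_le _ _
      _ = μ A := by rw [hnull, add_zero, measure_congr hD, measure_toMeasurable]

end Besicovitch

end MeasureTheory

theorem IsMonotoneHullOn.mono {D D' : Set (Set ℝ)} {Good : Set ℝ → Prop} {φ : Set ℝ → Set ℝ}
    (hφ : IsMonotoneHullOn D' Good φ) (hD : D ⊆ D') : IsMonotoneHullOn D Good φ :=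
  ⟨fun A hA => hφ.1 A (hD hA), fun A hA A' hA' => hφ.2 A (hD hA) A' (hD hA')⟩

theorem IsMonotoneHullOn.comp {D D' : Set (Set ℝ)} {Good : Set ℝ → Prop} {φ N : Set ℝ → Set ℝ}
    (hφ : IsMonotoneHullOn D' Good φ) (hND : ∀ A ∈ D, N A ∈ D')
    (hN : ∀ A ∈ D, A ⊆ N A ∧ volume (N A) = volume A)
    (hNmono : ∀ A ∈ D, ∀ A' ∈ D, A ⊆ A' → N A ⊆ N A') :
    IsMonotoneHullOn D Good (φ ∘ N) := by
  refine ⟨fun A hA => ?_, fun A hA A' hA' hAA' =>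
    hφ.2 _ (hND A hA) _ (hND A' hA') (hNmono A hA A' hA' hAA')⟩
  obtain ⟨hgood, hsub, hsup, hvol⟩ := hφ.1 _ (hND A hA)
  exact ⟨hgood, hsub, (hN A hA).1.trans hsup, hvol.trans (hN A hA).2⟩

/-- There is a monotone Borel hull operation on all subsets of `[0,1]` iff there is one
on the Lebesgue measurable subsets of `[0,1]`. -/
theorem monotone_borel_hull_all_iff_measurable :
    (∃ φ : Set ℝ → Set ℝ, IsMonotoneHullOn AllSets MeasurableSet φ) ↔
    (∃ φ : Set ℝ → Set ℝ, IsMonotoneHullOn LebSets MeasurableSet φ) := by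
  refine ⟨fun ⟨φ, hφ⟩ => ⟨φ, hφ.mono fun A hA => hA.1⟩, fun ⟨φ, hφ⟩ => ?_⟩
  obtain ⟨M, hM_mono, hM⟩ := exists_monotone_nullMeasurableSet_hull (volume : Measure ℝ)
  have hsub (A : Set ℝ) (hA : A ∈ AllSets) : A ⊆ M A ∩ Icc 0 1 := subset_inter (hM A).1 hA
  refine ⟨φ ∘ fun A => M A ∩ Icc 0 1, hφ.comp
    (fun A _ => ⟨inter_subset_right, (hM A).2.1.inter measurableSet_Icc.nullMeasurableSet⟩)
    (fun A hA => ⟨hsub A hA, ?_⟩)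
    (fun A _ A' _ hAA' => inter_subset_inter_left _ (hM_mono hAA'))⟩
  exact le_antisymm ((measure_mono inter_subset_left).trans (hM A).2.2.le)
    (measure_mono (hsub A hA))
end
end

section
/- Assume the Continuum Hypothesis (2^{ℵ₀} = ℵ₁). Then there exists a monotone Borel hull operation on L, the class of Lebesgue measurable subsets of [0,1]: a map φ : L → P([0,1]) such that φ(M) is a Borel set containing M with λ(φ(M)) = λ(M) for every M ∈ L, and M ⊆ M' implies φ(M) ⊆ φ(M'). -/
/-!
Under CH, enumerate the Borel sets as `(B w)` along `ω₁`, so that every initial segment is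
countable. Let `N w` be the union of the null sets `B v`, `v ≤ w`, and for a null set `Z` let
`C Z` be `N w` for the least `w` with `Z ⊆ N w` (for a non-null `Z`, the whole space). With `d`
the operator of Lebesgue density points put `D w = d (B w) ∪ N w` and
`φ S = ⋂ w, D w ∪ C (S \ D w)`; every term contains `S` and is monotone in `S`.
For measurable `A` pick `v` with `B v =ᵐ A` and `c` with `C (A \ D v) = N c`. Since `d` turns
a.e. inclusions into genuine inclusions, every term of index `w ≥ max v c` contains the `v`-th
one, so `φ A` is a countable intersection of Borel sets, and the `v`-th term is a.e. equal to `A`.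
-/

open MeasureTheory Set

noncomputable section

open Filter Topology Metric
open scoped ENNReal

universe u

namespace MeasureTheory

structure IsDensityOperator {α : Type*} [MeasurableSpace α] (μ : Measure α)
    (d : Set α → Set α) : Prop where
  measurableSet (s : Set α) : MeasurableSet (d s)
  subset_of_ae_le {s t : Set α} : s ≤ᵐ[μ] t → d s ⊆ d t
  ae_eq_self {s : Set α} : MeasurableSet s → d s =ᵐ[μ] s

section MonotoneHull

variable {α W : Type*} [MeasurableSpace α] (μ : Measure α) [LinearOrder W] (f : W → Set α)
  (d : Set α → Set α)

def nullUnionIic (w : W) : Set α := ⋃ v ∈ {v | v ≤ w ∧ μ (f v) = 0}, f v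

def nullCover (Z : Set α) : Set α := ⋂ (w) (_ : Z ⊆ nullUnionIic μ f w), nullUnionIic μ f w

def hullCore (w : W) : Set α := d (f w) ∪ nullUnionIic μ f w

def hullAt (S : Set α) (w : W) : Set α :=
  hullCore μ f d w ∪ nullCover μ f (S \ hullCore μ f d w)

def monotoneHull (S : Set α) : Set α := ⋂ w, hullAt μ f d S w

variable {μ f d}

theorem nullUnionIic_mono : Monotone (nullUnionIic μ f) :=
  fun _ _ hvw => biUnion_subset_biUnion_left fun _ hu => ⟨hu.1.trans hvw, hu.2⟩

theorem measure_nullUnionIic (hW : ∀ w : W, (Iic w).Countable) (w : W) :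
    μ (nullUnionIic μ f w) = 0 :=
  (measure_biUnion_null_iff ((hW w).mono fun _ hv => hv.1)).2 fun _ hv => hv.2

theorem measurableSet_nullUnionIic (hW : ∀ w : W, (Iic w).Countable)
    (hf : ∀ w, MeasurableSet (f w)) (w : W) : MeasurableSet (nullUnionIic μ f w) :=
  .biUnion ((hW w).mono fun _ hv => hv.1) fun v _ => hf v

theorem subset_nullCover (Z : Set α) : Z ⊆ nullCover μ f Z :=
  subset_iInter₂ fun _ hw => hw

theorem nullCover_mono : Monotone (nullCover μ f) :=
  fun _ _ hZ => subset_iInter₂ fun w hw => iInter₂_subset w (hZ.trans hw)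

theorem nullCover_subset {Z : Set α} {w : W} (hw : Z ⊆ nullUnionIic μ f w) :
    nullCover μ f Z ⊆ nullUnionIic μ f w :=
  iInter₂_subset w hw

theorem nullCover_eq_univ (hW : ∀ w : W, (Iic w).Countable) {Z : Set α} (hZ : μ Z ≠ 0) :
    nullCover μ f Z = univ :=
  eq_univ_of_forall fun _ => mem_iInter₂.2 fun w hw =>
    absurd (measure_mono_null hw (measure_nullUnionIic hW w)) hZ

theorem exists_nullCover_eq [WellFoundedLT W] (hsurj : ∀ s, MeasurableSet s → ∃ w, f w = s)
    {Z : Set α} (hZ : μ Z = 0) : ∃ w, nullCover μ f Z = nullUnionIic μ f w := by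
  obtain ⟨v, hv⟩ := hsurj _ (measurableSet_toMeasurable μ Z)
  have hcover : Z ⊆ nullUnionIic μ f v := (subset_toMeasurable μ Z).trans <|
    hv ▸ subset_biUnion_of_mem (u := f) ⟨le_rfl, by rw [hv, measure_toMeasurable, hZ]⟩
  obtain ⟨w, hw, hmin⟩ := wellFounded_lt.has_min {w | Z ⊆ nullUnionIic μ f w} ⟨v, hcover⟩
  exact ⟨w, (nullCover_subset hw).antisymm
    (subset_iInter₂ fun u hu => nullUnionIic_mono (not_lt.1 (hmin u hu)))⟩

theorem measurableSet_nullCover [WellFoundedLT W] (hW : ∀ w : W, (Iic w).Countable)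
    (hf : ∀ w, MeasurableSet (f w)) (hsurj : ∀ s, MeasurableSet s → ∃ w, f w = s)
    (Z : Set α) : MeasurableSet (nullCover μ f Z) := by
  by_cases hZ : μ Z = 0
  · obtain ⟨w, hw⟩ := exists_nullCover_eq hsurj hZ
    exact hw ▸ measurableSet_nullUnionIic hW hf w
  · exact nullCover_eq_univ hW hZ ▸ .univ

theorem hullCore_ae_eq (hW : ∀ w : W, (Iic w).Countable) (hf : ∀ w, MeasurableSet (f w))
    (hd : IsDensityOperator μ d) (w : W) : hullCore μ f d w =ᵐ[μ] f w :=
  (union_ae_eq_left_of_ae_eq_empty (ae_eq_empty.2 (measure_nullUnionIic hW w))).trans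
    (hd.ae_eq_self (hf w))

theorem subset_hullAt (S : Set α) (w : W) : S ⊆ hullAt μ f d S w :=
  sdiff_subset_iff.1 (subset_nullCover _)

theorem hullAt_mono (w : W) : Monotone fun S => hullAt μ f d S w :=
  fun _ _ hS => union_subset_union_right _ (nullCover_mono (sdiff_subset_sdiff_left hS))

theorem measurableSet_hullAt [WellFoundedLT W] (hW : ∀ w : W, (Iic w).Countable)
    (hf : ∀ w, MeasurableSet (f w)) (hsurj : ∀ s, MeasurableSet s → ∃ w, f w = s)
    (hd : IsDensityOperator μ d) (S : Set α) (w : W) : MeasurableSet (hullAt μ f d S w) :=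
  ((hd.measurableSet _).union (measurableSet_nullUnionIic hW hf w)).union
    (measurableSet_nullCover hW hf hsurj _)

theorem hullCore_subset_hullAt (hW : ∀ w : W, (Iic w).Countable)
    (hf : ∀ w, MeasurableSet (f w)) (hd : IsDensityOperator μ d) {A : Set α} {v w : W}
    (hv : f v ≤ᵐ[μ] A) (hvw : v ≤ w) : hullCore μ f d v ⊆ hullAt μ f d A w := by
  by_cases hA : μ (A \ hullCore μ f d w) = 0
  · have hvw' : f v ≤ᵐ[μ] f w :=
      hv.trans ((ae_le_set.2 hA).trans (hullCore_ae_eq hW hf hd w).le)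
    exact (union_subset_union (hd.subset_of_ae_le hvw') (nullUnionIic_mono hvw)).trans
      subset_union_left
  · rw [hullAt, nullCover_eq_univ hW hA, union_univ]
    exact subset_univ _

theorem hullAt_subset_hullAt (hW : ∀ w : W, (Iic w).Countable)
    (hf : ∀ w, MeasurableSet (f w)) (hd : IsDensityOperator μ d) {A : Set α} {v c w : W}
    (hv : f v ≤ᵐ[μ] A) (hc : nullCover μ f (A \ hullCore μ f d v) = nullUnionIic μ f c)
    (hvw : v ≤ w) (hcw : c ≤ w) : hullAt μ f d A v ⊆ hullAt μ f d A w := by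
  rw [hullAt, hc]
  refine union_subset (hullCore_subset_hullAt hW hf hd hv hvw) ?_
  exact (nullUnionIic_mono hcw).trans (subset_union_right.trans subset_union_left)

theorem hullAt_ae_eq (hW : ∀ w : W, (Iic w).Countable) (hf : ∀ w, MeasurableSet (f w))
    (hd : IsDensityOperator μ d) {A : Set α} {v c : W}
    (hc : nullCover μ f (A \ hullCore μ f d v) = nullUnionIic μ f c) :
    hullAt μ f d A v =ᵐ[μ] f v := by
  rw [hullAt, hc]
  exact (union_ae_eq_left_of_ae_eq_empty (ae_eq_empty.2 (measure_nullUnionIic hW c))).trans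
    (hullCore_ae_eq hW hf hd v)

theorem exists_ae_eq_nullCover_eq [WellFoundedLT W] (hW : ∀ w : W, (Iic w).Countable)
    (hf : ∀ w, MeasurableSet (f w)) (hsurj : ∀ s, MeasurableSet s → ∃ w, f w = s)
    (hd : IsDensityOperator μ d) {A : Set α} (hA : NullMeasurableSet A μ) :
    ∃ v c, f v =ᵐ[μ] A ∧ nullCover μ f (A \ hullCore μ f d v) = nullUnionIic μ f c := by
  obtain ⟨v, hv⟩ := hsurj _ (measurableSet_toMeasurable μ A)
  have hvA : f v =ᵐ[μ] A := hv ▸ hA.toMeasurable_ae_eq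
  obtain ⟨c, hc⟩ := exists_nullCover_eq hsurj
    (ae_le_set.1 (hvA.symm.trans (hullCore_ae_eq hW hf hd v).symm).le)
  exact ⟨v, c, hvA, hc⟩

theorem monotoneHull_eq_biInter (hW : ∀ w : W, (Iic w).Countable)
    (hf : ∀ w, MeasurableSet (f w)) (hd : IsDensityOperator μ d) {A : Set α} {v c : W}
    (hv : f v ≤ᵐ[μ] A) (hc : nullCover μ f (A \ hullCore μ f d v) = nullUnionIic μ f c) :
    monotoneHull μ f d A = ⋂ w ∈ Iic (max v c), hullAt μ f d A w := by
  refine subset_antisymm (subset_iInter₂ fun w _ => iInter_subset _ w) (subset_iInter fun w => ?_)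
  rcases le_or_gt w (max v c) with hw | hw
  · exact biInter_subset_of_mem hw
  · have hv_mem : v ∈ Iic (max v c) := le_max_left v c
    exact (biInter_subset_of_mem hv_mem).trans <| hullAt_subset_hullAt hW hf hd hv hc
      ((le_max_left v c).trans hw.le) ((le_max_right v c).trans hw.le)

theorem subset_monotoneHull (S : Set α) : S ⊆ monotoneHull μ f d S :=
  subset_iInter fun w => subset_hullAt S w

theorem monotone_monotoneHull : Monotone (monotoneHull μ f d) :=
  fun _ _ hS => iInter_mono fun w => hullAt_mono w hS

theorem measurableSet_monotoneHull [WellFoundedLT W] (hW : ∀ w : W, (Iic w).Countable)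
    (hf : ∀ w, MeasurableSet (f w)) (hsurj : ∀ s, MeasurableSet s → ∃ w, f w = s)
    (hd : IsDensityOperator μ d) {A : Set α} (hA : NullMeasurableSet A μ) :
    MeasurableSet (monotoneHull μ f d A) := by
  obtain ⟨v, c, hvA, hc⟩ := exists_ae_eq_nullCover_eq hW hf hsurj hd hA
  rw [monotoneHull_eq_biInter hW hf hd hvA.le hc]
  exact .biInter (hW _) fun w _ => measurableSet_hullAt hW hf hsurj hd A w

theorem measure_monotoneHull [WellFoundedLT W] (hW : ∀ w : W, (Iic w).Countable)
    (hf : ∀ w, MeasurableSet (f w)) (hsurj : ∀ s, MeasurableSet s → ∃ w, f w = s)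
    (hd : IsDensityOperator μ d) {A : Set α} (hA : NullMeasurableSet A μ) :
    μ (monotoneHull μ f d A) = μ A := by
  obtain ⟨v, c, hvA, hc⟩ := exists_ae_eq_nullCover_eq hW hf hsurj hd hA
  refine le_antisymm ?_ (measure_mono (subset_monotoneHull A))
  calc μ (monotoneHull μ f d A) ≤ μ (hullAt μ f d A v) := measure_mono (iInter_subset _ v)
    _ = μ A := measure_congr ((hullAt_ae_eq hW hf hd hc).trans hvA)

end MonotoneHull

end MeasureTheory

namespace Real

theorem volume_inter_closedBall_le (S : Set ℝ) (x y r : ℝ) :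
    volume (S ∩ closedBall y r) ≤
      volume (S ∩ closedBall x r) + ENNReal.ofReal (2 * dist y x) := by
  set R := r + dist y x
  have hball : closedBall y r ⊆ closedBall x R := closedBall_subset_closedBall' le_rfl
  have hshell : volume (closedBall x R \ closedBall x r) ≤ ENNReal.ofReal (2 * dist y x) := by
    rw [measure_sdiff_le_iff_le_add measurableSet_closedBall.nullMeasurableSet
      (closedBall_subset_closedBall (by simp [R])) measure_closedBall_lt_top.ne,
      volume_closedBall, volume_closedBall, mul_add]
    exact ENNReal.ofReal_add_le
  calc volume (S ∩ closedBall y r)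
      ≤ volume (S ∩ closedBall x R) := measure_mono (inter_subset_inter_right S hball)
    _ ≤ volume (S ∩ closedBall x R ∩ closedBall x r) +
          volume ((S ∩ closedBall x R) \ closedBall x r) :=
      measure_le_inter_add_sdiff _ _ _
    _ ≤ volume (S ∩ closedBall x r) + ENNReal.ofReal (2 * dist y x) := by
      refine add_le_add (measure_mono (inter_subset_inter_left _ inter_subset_left)) ?_
      exact (measure_mono (sdiff_subset_sdiff_left inter_subset_right)).trans hshell

theorem continuous_volume_inter_closedBall (S : Set ℝ) (r : ℝ) :
    Continuous fun x => volume (S ∩ closedBall x r) := by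
  have hfin (x : ℝ) : volume (S ∩ closedBall x r) ≠ ∞ :=
    measure_ne_top_of_subset inter_subset_right measure_closedBall_lt_top.ne
  have hlip : LipschitzWith 2 fun x => (volume (S ∩ closedBall x r)).toReal := by
    refine LipschitzWith.of_le_add_mul 2 fun y x => ?_
    have := ENNReal.toReal_mono (ENNReal.add_ne_top.2 ⟨hfin x, ENNReal.ofReal_ne_top⟩)
      (volume_inter_closedBall_le S x y r)
    rwa [ENNReal.toReal_add (hfin x) ENNReal.ofReal_ne_top,
      ENNReal.toReal_ofReal (by positivity)] at this
  simpa only [Function.comp_def, ENNReal.ofReal_toReal (hfin _)] using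
    ENNReal.continuous_ofReal.comp hlip.continuous

/-- Points where `S` has lower density `1`, with radii restricted to rationals so that
`densityPoints S` is Borel for every `S`. -/
def densityPoints (S : Set ℝ) : Set ℝ :=
  {x | ∀ n : ℕ, ∃ δ : ℚ, 0 < δ ∧ ∀ r : ℚ, (r : ℝ) ∈ Ioo 0 (δ : ℝ) →
    1 - (n : ℝ≥0∞)⁻¹ ≤ volume (S ∩ closedBall x r) / volume (closedBall x r)}

theorem measurableSet_densityPoints (S : Set ℝ) : MeasurableSet (densityPoints S) := by
  have hratio (r : ℝ) :
      Measurable fun x => volume (S ∩ closedBall x r) / volume (closedBall x r) := by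
    simp only [volume_closedBall]
    exact (continuous_volume_inter_closedBall S r).measurable.div_const _
  have hlevel (c : ℝ≥0∞) (r : ℝ) :
      Measurable fun x => c ≤ volume (S ∩ closedBall x r) / volume (closedBall x r) :=
    measurableSet_setOfPred.1 (measurableSet_le measurable_const (hratio r))
  exact measurableSet_setOfPred.2 (by fun_prop)

theorem densityPoints_mono_ae {S T : Set ℝ} (h : S ≤ᵐ[volume] T) :
    densityPoints S ⊆ densityPoints T := by
  intro x hx n
  obtain ⟨δ, hδ, hS⟩ := hx n
  exact ⟨δ, hδ, fun r hr => (hS r hr).trans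
    (ENNReal.div_le_div_right (measure_mono_ae (h.inter EventuallyLE.rfl)) _)⟩

theorem mem_densityPoints_of_tendsto {S : Set ℝ} {x : ℝ}
    (h : Tendsto (fun r => volume (S ∩ closedBall x r) / volume (closedBall x r)) (𝓝[>] 0)
      (𝓝 1)) : x ∈ densityPoints S := by
  intro n
  have hn : 1 - (n : ℝ≥0∞)⁻¹ < 1 := ENNReal.sub_lt_self ENNReal.one_ne_top one_ne_zero
    (ENNReal.inv_ne_zero.2 (ENNReal.natCast_ne_top n))
  obtain ⟨ε, hε, hsub⟩ := mem_nhdsGT_iff_exists_Ioo_subset.1 (h (Ioi_mem_nhds hn))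
  obtain ⟨δ, hδ, hδε⟩ := exists_rat_btwn (mem_Ioi.1 hε)
  exact ⟨δ, by exact_mod_cast hδ, fun r hr => (hsub ⟨hr.1, hr.2.trans hδε⟩).le⟩

theorem notMem_densityPoints_of_tendsto {S : Set ℝ} {x : ℝ}
    (h : Tendsto (fun r => volume (S ∩ closedBall x r) / volume (closedBall x r)) (𝓝[>] 0)
      (𝓝 0)) : x ∉ densityPoints S := by
  intro hx
  obtain ⟨δ, hδ, hlow⟩ := hx 2
  have hpos : (0 : ℝ≥0∞) < 1 - ((2 : ℕ) : ℝ≥0∞)⁻¹ :=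
    tsub_pos_of_lt (ENNReal.inv_lt_one.2 (by norm_num))
  obtain ⟨ε, hε, hsub⟩ := mem_nhdsGT_iff_exists_Ioo_subset.1 (h (Iio_mem_nhds hpos))
  have hδ' : (0 : ℝ) < δ := by exact_mod_cast hδ
  obtain ⟨r, hr, hrδε⟩ := exists_rat_btwn (lt_min (mem_Ioi.1 hε) hδ')
  exact (hlow r ⟨hr, hrδε.trans_le (min_le_right _ _)⟩).not_gt
    (hsub ⟨hr, hrδε.trans_le (min_le_left _ _)⟩)

theorem densityPoints_ae_eq {S : Set ℝ} (hS : MeasurableSet S) :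
    densityPoints S =ᵐ[volume] S := by
  filter_upwards [Besicovitch.ae_tendsto_measure_inter_div_of_measurableSet volume hS] with x hx
  by_cases hxS : x ∈ S
  · rw [indicator_of_mem hxS, Pi.one_apply] at hx
    exact propext ⟨fun _ => hxS, fun _ => mem_densityPoints_of_tendsto hx⟩
  · rw [indicator_of_notMem hxS] at hx
    exact propext ⟨fun h => absurd h (notMem_densityPoints_of_tendsto hx), (absurd · hxS)⟩

theorem isDensityOperator_densityPoints : IsDensityOperator volume densityPoints where
  measurableSet := measurableSet_densityPoints
  subset_of_ae_le := densityPoints_mono_ae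
  ae_eq_self := densityPoints_ae_eq

end Real

open Cardinal in
theorem MeasurableSpace.CountablyGenerated.cardinal_measurableSet_le_continuum {α : Type*}
    [MeasurableSpace α] [MeasurableSpace.CountablyGenerated α] :
    #{s : Set α | MeasurableSet s} ≤ 𝔠 := by
  obtain ⟨b, hb, hgen⟩ := MeasurableSpace.CountablyGenerated.isCountablyGenerated (α := α)
  rw [hgen]
  exact MeasurableSpace.cardinal_measurableSet_le_continuum
    ((le_aleph0_iff_set_countable.2 hb).trans aleph0_le_continuum)

open Cardinal in
theorem countable_Iic_toType_ord_aleph_one (w : (ℵ₁ : Cardinal).ord.ToType) :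
    (Iic w).Countable := by
  rw [← Iio_union_right]
  refine .union ?_ (countable_singleton w)
  rw [← le_aleph0_iff_set_countable, ← lt_aleph_one_iff]
  simpa using mk_Iio_lt w

open Cardinal Function in
theorem exists_enumeration_measurableSet_of_le_aleph_one {α : Type u} [MeasurableSpace α]
    (h : #{s : Set α | MeasurableSet s} ≤ ℵ₁) :
    ∃ f : (ℵ₁ : Cardinal.{u}).ord.ToType → Set α,
      (∀ w, MeasurableSet (f w)) ∧ ∀ s, MeasurableSet s → ∃ w, f w = s := by
  obtain ⟨e⟩ : Nonempty ({s : Set α | MeasurableSet s} ↪ (ℵ₁ : Cardinal.{u}).ord.ToType) := by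
    rwa [← Cardinal.le_def, mk_ord_toType]
  have : Nonempty {s : Set α | MeasurableSet s} := ⟨⟨∅, .empty⟩⟩
  refine ⟨fun w => (invFun e w).val, fun w => (invFun e w).2, fun s hs => ?_⟩
  obtain ⟨w, hw⟩ := invFun_surjective e.injective ⟨s, hs⟩
  exact ⟨w, congrArg Subtype.val hw⟩

/-- Assuming the Continuum Hypothesis `2^ℵ₀ = ℵ₁`, there exists a monotone Borel hull
operation on the Lebesgue measurable subsets of `[0,1]`. -/
theorem monotone_borel_hull_on_measurable_of_CH
    (hCH : (2 : Cardinal) ^ Cardinal.aleph0 = Cardinal.aleph 1) :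
    ∃ φ : Set ℝ → Set ℝ, IsMonotoneHullOn LebSets MeasurableSet φ := by
  have hCH₀ : Cardinal.continuum.{0} = Cardinal.aleph 1 := by
    rw [← Cardinal.lift_inj]
    simpa using hCH
  obtain ⟨f, hf, hsurj⟩ := exists_enumeration_measurableSet_of_le_aleph_one (α := ℝ)
    (hCH₀ ▸ MeasurableSpace.CountablyGenerated.cardinal_measurableSet_le_continuum)
  have hW := countable_Iic_toType_ord_aleph_one.{0}
  have hd := Real.isDensityOperator_densityPoints
  refine ⟨fun A => monotoneHull volume f Real.densityPoints A ∩ Icc 0 1,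
    fun A hA => ⟨?_, inter_subset_right, subset_inter (subset_monotoneHull A) hA.1, ?_⟩,
    fun A _ A' _ hAA' => inter_subset_inter_left _ (monotone_monotoneHull hAA')⟩
  · exact (measurableSet_monotoneHull hW hf hsurj hd hA.2).inter measurableSet_Icc
  · refine le_antisymm ?_ (measure_mono (subset_inter (subset_monotoneHull A) hA.1))
    exact (measure_mono inter_subset_left).trans (measure_monotoneHull hW hf hsurj hd hA.2).le
end
end

section
/- Assume the Continuum Hypothesis (2^{ℵ₀} = ℵ₁). Then there exists a monotone map ψ : L → P([0,1]) such that ψ(M) is a G_δ subset of [0,1] for every M ∈ L, λ(M Δ ψ(M)) = 0 for every M ∈ L, M ⊆ M' implies ψ(M) ⊆ ψ(M'), and whenever M, M' ∈ L satisfy λ(M Δ M') = 0, one has ψ(M) = ψ(M'). -/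
/-!
Under CH the measure algebra of `[0,1]`, represented by Borel sets (there are `𝔠 = ℵ₁` of them),
can be well ordered so that every element has only countably many predecessors. Gδ
representatives are chosen by transfinite recursion along this order. At each step only countably
many representatives are fixed: those of sets a.e. above the current set `M` intersect to a Gδ set
`H` a.e. containing `M`, those of sets a.e. below `M` lie in `H`, and a Gδ set a.e. equal to `M`
fits between the two, because every null set lies in a null Gδ set.
-/

open MeasureTheory Set

noncomputable section

open Filter Cardinal
open scoped ENNReal

theorem exists_monotone_of_countable_interpolation {α β : Type*} [Preorder β] [Nonempty β]
    (hα : #α ≤ ℵ₁) (r : α → α → Prop) (P : α → β → Prop)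
    (hP : ∀ (a : α) (D : Set α), D.Countable → ∀ g : D → β, (∀ d : D, P d (g d)) →
      (∀ d d' : D, r d d' → g d ≤ g d') →
      ∃ b, P a b ∧ (∀ d : D, r d a → g d ≤ b) ∧ (∀ d : D, r a d → b ≤ g d)) :
    ∃ f : α → β, (∀ a a', r a a' → f a ≤ f a') ∧ ∀ a, P a (f a) := by
  obtain ⟨_, _, hord⟩ := exists_ord_eq_type_lt α
  have hIio : ∀ a : α, (Iio a).Countable := fun a ↦
    le_aleph0_iff_set_countable.1 (lt_aleph_one_iff.1 ((mk_Iio_lt a hord).trans_le hα))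
  let Admissible (a : α) (g : Iio a → β) (b : β) : Prop :=
    P a b ∧ (∀ d : Iio a, r d a → g d ≤ b) ∧ (∀ d : Iio a, r a d → b ≤ g d)
  let f : α → β := wellFounded_lt.fix fun a g ↦ Classical.epsilon (Admissible a fun d ↦ g d d.2)
  have hf : ∀ a, f a = Classical.epsilon (Admissible a fun d ↦ f d) :=
    wellFounded_lt.fix_eq _
  have hadm : ∀ a, Admissible a (fun d ↦ f d) (f a) := by
    intro a
    induction a using WellFoundedLT.induction with | _ a ih =>
    rw [hf]
    refine Classical.epsilon_spec (hP a (Iio a) (hIio a) _ (fun d ↦ (ih d d.2).1) ?_)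
    intro d d' hdd'
    rcases lt_trichotomy d.1 d'.1 with h | h | h
    · exact (ih d' d'.2).2.1 ⟨d, h⟩ hdd'
    · rw [Subtype.ext h]
    · exact (ih d d.2).2.2 ⟨d', h⟩ hdd'
  refine ⟨f, fun a a' haa' ↦ ?_, fun a ↦ (hadm a).1⟩
  rcases lt_trichotomy a a' with h | rfl | h
  · exact (hadm a').2.1 ⟨a, h⟩ haa'
  · exact le_rfl
  · exact (hadm a).2.2 ⟨a', h⟩ haa'

universe u v in
theorem continuum_eq_aleph_one_of_two_power_aleph0_eq (hCH : (2 : Cardinal.{u}) ^ ℵ₀ = ℵ₁) :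
    Cardinal.continuum.{v} = ℵ₁ := by
  apply lift_injective.{u, v}
  simpa [two_power_aleph0] using congrArg lift.{v} hCH

theorem card_measurableSet_le_continuum (X : Type*) [m : MeasurableSpace X]
    [MeasurableSpace.CountablyGenerated X] : #{s : Set X // MeasurableSet s} ≤ 𝔠 := by
  obtain ⟨b, hb, rfl⟩ := MeasurableSpace.CountablyGenerated.isCountablyGenerated (α := X)
  exact MeasurableSpace.cardinal_measurableSet_le_continuum
    (hb.le_aleph0.trans aleph0_le_continuum)

theorem inter_ae_eq_of_ae_eq_restrict {X : Type*} [MeasurableSpace X] {μ : Measure X}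
    {K s t : Set X} (hK : NullMeasurableSet K μ) (hsK : s ⊆ K) (h : t =ᵐ[μ.restrict K] s) :
    (t ∩ K : Set X) =ᵐ[μ] s := by
  filter_upwards [(ae_restrict_iff'₀ hK).1 h] with x hx
  exact propext ⟨fun hx' ↦ (hx hx'.2).mp hx'.1, fun hx' ↦ ⟨(hx (hsK hx')).mpr hx', hsK hx'⟩⟩

section

variable {X : Type*} [TopologicalSpace X] [MeasurableSpace X] {μ : Measure X} [μ.OuterRegular]

theorem exists_isGδ_superset_ae_eq {s : Set X} (hs : NullMeasurableSet s μ) (hμs : μ s ≠ ∞) :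
    ∃ T, IsGδ T ∧ s ⊆ T ∧ T =ᵐ[μ] s := by
  choose U hsU hU hμU using fun n : ℕ ↦
    s.exists_isOpen_lt_add hμs (ENNReal.inv_ne_zero.2 (ENNReal.natCast_ne_top n))
  have hle : μ (⋂ n, U n) ≤ μ s := by
    refine ge_of_tendsto' (by simpa using ENNReal.tendsto_inv_nat_nhds_zero.const_add (μ s))
      fun n ↦ (measure_mono (iInter_subset U n)).trans (hμU n).le
  exact ⟨⋂ n, U n, .iInter_of_isOpen hU, subset_iInter hsU,
    (ae_eq_of_subset_of_measure_ge (subset_iInter hsU) hle hs (ne_top_of_le_ne_top hμs hle)).symm⟩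

theorem exists_isGδ_superset_measure_zero {s : Set X} (hs : μ s = 0) :
    ∃ T, IsGδ T ∧ s ⊆ T ∧ μ T = 0 := by
  obtain ⟨T, hT, hsT, hTs⟩ := exists_isGδ_superset_ae_eq (.of_null hs) (by simp [hs])
  exact ⟨T, hT, hsT, (measure_congr hTs).trans hs⟩

theorem exists_isGδ_ae_eq_of_subset_of_ae_le {M H : Set X} (hM : NullMeasurableSet M μ)
    (hμM : μ M ≠ ∞) (hH : IsGδ H) (hMH : M ≤ᵐ[μ] H) {ι : Type*} [Countable ι]
    {G : ι → Set X} (hGH : ∀ i, G i ⊆ H) (hGM : ∀ i, G i ≤ᵐ[μ] M) :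
    ∃ T, IsGδ T ∧ (∀ i, G i ⊆ T) ∧ T ⊆ H ∧ T =ᵐ[μ] M := by
  obtain ⟨T₀, hT₀, hMT₀, hT₀M⟩ := exists_isGδ_superset_ae_eq hM hμM
  -- `T₀` may miss null parts of the `G i`; a null Gδ set `N` covers them
  obtain ⟨N, hN, hGN, hμN⟩ := exists_isGδ_superset_measure_zero (s := ⋃ i, G i \ T₀) <|
    measure_iUnion_null fun i ↦ ae_le_set.1 ((hGM i).trans hT₀M.symm.le)
  refine ⟨(T₀ ∪ N) ∩ H, (hT₀.union hN).inter hH, fun i x hx ↦ ⟨?_, hGH i hx⟩,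
    inter_subset_right, ?_⟩
  · by_cases hxT₀ : x ∈ T₀
    · exact Or.inl hxT₀
    · exact Or.inr (hGN (mem_iUnion.2 ⟨i, hx, hxT₀⟩))
  · filter_upwards [hT₀M, hMH, measure_eq_zero_iff_ae_notMem.1 hμN] with x hT₀x hHx hNx
    have hT₀x : x ∈ T₀ ↔ x ∈ M := Iff.of_eq hT₀x
    exact propext ⟨fun h ↦ hT₀x.1 (h.1.resolve_right hNx), fun h ↦ ⟨.inl (hT₀x.2 h), hHx h⟩⟩

theorem exists_isGδ_ae_eq_extending {M : Set X} (hM : NullMeasurableSet M μ) (hμM : μ M ≠ ∞)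
    {ι : Type*} [Countable ι] {s g : ι → Set X} (hg : ∀ i, IsGδ (g i) ∧ g i =ᵐ[μ] s i)
    (hg_mono : ∀ i j, s i ≤ᵐ[μ] s j → g i ⊆ g j) :
    ∃ T, (IsGδ T ∧ T =ᵐ[μ] M) ∧ (∀ i, s i ≤ᵐ[μ] M → g i ⊆ T) ∧ ∀ i, M ≤ᵐ[μ] s i → T ⊆ g i := by
  have hMH : M ≤ᵐ[μ] ⋂ j : {j // M ≤ᵐ[μ] s j}, g j := by
    filter_upwards [ae_all_iff.2 fun j : {j // M ≤ᵐ[μ] s j} ↦ j.2.trans (hg j).2.symm.le]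
      with x hx hxM
    exact mem_iInter.2 fun j ↦ hx j hxM
  obtain ⟨T, hT, hgT, hTH, hTM⟩ := exists_isGδ_ae_eq_of_subset_of_ae_le hM hμM
    (.iInter fun j : {j // M ≤ᵐ[μ] s j} ↦ (hg j).1) hMH (G := fun i : {i // s i ≤ᵐ[μ] M} ↦ g i)
    (fun i ↦ subset_iInter fun j ↦ hg_mono i j (i.2.trans j.2)) (fun i ↦ (hg i).2.le.trans i.2)
  exact ⟨T, ⟨hT, hTM⟩, fun i hiM ↦ hgT ⟨i, hiM⟩,
    fun j hMj ↦ hTH.trans (iInter_subset (fun j : {j // M ≤ᵐ[μ] s j} ↦ g j) ⟨j, hMj⟩)⟩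

theorem exists_monotone_isGδ_ae_eq_lift [IsFiniteMeasure μ]
    (hX : #{s : Set X // MeasurableSet s} ≤ ℵ₁) :
    ∃ ψ : Set X → Set X, (∀ s, IsGδ (ψ s)) ∧ (∀ s, NullMeasurableSet s μ → ψ s =ᵐ[μ] s) ∧
      ∀ s t, NullMeasurableSet s μ → NullMeasurableSet t μ → s ≤ᵐ[μ] t → ψ s ⊆ ψ t := by
  obtain ⟨f, hf_mono, hf⟩ := exists_monotone_of_countable_interpolation hX
    (fun s t : {s : Set X // MeasurableSet s} ↦ (s : Set X) ≤ᵐ[μ] (t : Set X))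
    (fun s T ↦ IsGδ T ∧ T =ᵐ[μ] (s : Set X)) fun a D hD g hg hg_mono ↦
      have := hD.to_subtype
      exists_isGδ_ae_eq_extending a.2.nullMeasurableSet (measure_ne_top μ _) hg hg_mono
  refine ⟨fun s ↦ f ⟨toMeasurable μ s, measurableSet_toMeasurable μ s⟩, fun s ↦ (hf _).1,
    fun s hs ↦ (hf _).2.trans hs.toMeasurable_ae_eq, fun s t hs ht hst ↦ hf_mono _ _ ?_⟩
  exact hs.toMeasurable_ae_eq.le.trans (hst.trans ht.toMeasurable_ae_eq.symm.le)

end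

/-- Assuming the Continuum Hypothesis `2^ℵ₀ = ℵ₁`, there exists a monotone map
`ψ : L → 𝒫([0,1])` such that `ψ(M)` is a Gδ set, `λ(M Δ ψ(M)) = 0` for every `M ∈ L`,
`M ⊆ M'` implies `ψ(M) ⊆ ψ(M')`, and `λ(M Δ M') = 0` implies `ψ(M) = ψ(M')`. -/
theorem monotone_Gdelta_aelifting_of_CH
    (hCH : (2 : Cardinal) ^ Cardinal.aleph0 = Cardinal.aleph 1) :
    ∃ ψ : Set ℝ → Set ℝ,
      (∀ M ∈ LebSets, IsGδ (ψ M) ∧ ψ M ⊆ Icc (0:ℝ) 1 ∧ volume (symmDiff M (ψ M)) = 0) ∧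
      (∀ M ∈ LebSets, ∀ M' ∈ LebSets, M ⊆ M' → ψ M ⊆ ψ M') ∧
      (∀ M ∈ LebSets, ∀ M' ∈ LebSets, volume (symmDiff M M') = 0 → ψ M = ψ M') := by
  have hcard : #{s : Set ℝ // MeasurableSet s} ≤ ℵ₁ :=
    continuum_eq_aleph_one_of_two_power_aleph0_eq hCH ▸ card_measurableSet_le_continuum ℝ
  obtain ⟨ψ, hψ_Gδ, hψ_ae, hψ_mono⟩ :=
    exists_monotone_isGδ_ae_eq_lift (μ := volume.restrict (Icc (0:ℝ) 1)) hcard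
  have hnull : ∀ M ∈ LebSets, NullMeasurableSet M (volume.restrict (Icc 0 1)) :=
    fun M hM ↦ hM.2.mono Measure.restrict_le_self
  refine ⟨fun M ↦ ψ M ∩ Icc 0 1, fun M hM ↦ ⟨(hψ_Gδ M).inter isClosed_Icc.isGδ,
    inter_subset_right, ?_⟩, fun M hM M' hM' hMM' ↦ inter_subset_inter_left _
      (hψ_mono M M' (hnull M hM) (hnull M' hM') hMM'.eventuallyLE), fun M hM M' hM' hMM' ↦ ?_⟩
  · exact measure_symmDiff_eq_zero_iff.2 (inter_ae_eq_of_ae_eq_restrict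
      measurableSet_Icc.nullMeasurableSet hM.1 (hψ_ae M (hnull M hM))).symm
  · have h := (measure_symmDiff_eq_zero_iff.1 hMM').restrict (s := Icc (0:ℝ) 1)
    exact congrArg (· ∩ Icc 0 1) ((hψ_mono M M' (hnull M hM) (hnull M' hM') h.le).antisymm
      (hψ_mono M' M (hnull M' hM') (hnull M hM) h.symm.le))
end
end

section
/- Assume the Continuum Hypothesis (2^{ℵ₀} = ℵ₁). Then there exists a monotone Borel hull operation φ on N (so φ(A) is a Borel hull of A for every Lebesgue null A ⊆ [0,1], and A ⊆ A' implies φ(A) ⊆ φ(A')) which in addition satisfies: (1) φ(A ∪ A') ⊆ φ(A) ∪ φ(A') for all A, A' ∈ N (subadditivity), and (2) for every Borel set B ⊆ [0,1], the set (⋃{φ(A) : A ⊆ B, A ∈ N}) \ B is Lebesgue null. -/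
open MeasureTheory Set

noncomputable section

/-!
Under CH the Borel subsets of `[0,1]` can be listed as `(B_ξ)_{ξ<ω₁}`. Let `𝓑_ξ` be the countable
family of finite unions of the `B_η`, `η ≤ ξ`, and `C_ξ` the union of the null members of `𝓑_ξ`,
a null set. For a null `A` let `α(A)` be the first stage at which some null member of `𝓑_ξ`
covers `A`, and put `φ(A) = ⋂ {E ∪ C_ξ | ξ ≤ α(A), E ∈ 𝓑_ξ, A ⊆ E}`: a countable intersection
of Borel sets, contained in `C_{α(A)}`.

The key inclusion is `φ(A) ⊆ E ∪ C_ξ` for *every* stage `ξ` and every `E ∈ 𝓑_ξ` covering `A`: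
for `ξ ≤ α(A)` it is a term of the intersection, and beyond `α(A)` already `φ(A) ⊆ C_ξ`.
Monotonicity follows at once, and so does the vanishing property, with `E = B`.
For subadditivity, a point outside `φ(A) ∪ φ(A')` escapes terms `E ∪ C_ξ` and `E' ∪ C_ξ'`,
hence escapes `(E ∪ E') ∪ C_{max ξ ξ'}`, a term of `φ(A ∪ A')`.
-/

section NullUnion

variable {α ι : Type*} [MeasurableSpace α] (𝓑 : ι → Set (Set α)) (μ : Measure α)

def nullUnion (i : ι) : Set α := ⋃₀ {E ∈ 𝓑 i | μ E = 0}

def IsNullCoveredAt (A : Set α) (i : ι) : Prop := ∃ E ∈ 𝓑 i, μ E = 0 ∧ A ⊆ E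

variable {𝓑 μ}

theorem nullUnion_mono [Preorder ι] (h𝓑 : Monotone 𝓑) : Monotone (nullUnion 𝓑 μ) :=
  fun _ _ hij => sUnion_mono fun _ hE => ⟨h𝓑 hij hE.1, hE.2⟩

theorem subset_nullUnion {i : ι} {E : Set α} (hE : E ∈ 𝓑 i) (hE0 : μ E = 0) :
    E ⊆ nullUnion 𝓑 μ i :=
  subset_sUnion_of_mem ⟨hE, hE0⟩

theorem nullUnion_subset {i : ι} {s : Set α} (h : ∀ E ∈ 𝓑 i, E ⊆ s) : nullUnion 𝓑 μ i ⊆ s :=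
  sUnion_subset fun E hE => h E hE.1

theorem measure_nullUnion {i : ι} (hc : (𝓑 i).Countable) : μ (nullUnion 𝓑 μ i) = 0 :=
  (measure_sUnion_null_iff (hc.mono (sep_subset _ _))).2 fun _ hE => hE.2

theorem exists_isNullCoveredAt {s A : Set α}
    (h𝓑 : ∀ B, MeasurableSet B → B ⊆ s → ∃ i, B ∈ 𝓑 i) (hs : MeasurableSet s) (hAs : A ⊆ s)
    (hA : μ A = 0) : ∃ i, IsNullCoveredAt 𝓑 μ A i := by
  obtain ⟨i, hi⟩ := h𝓑 (toMeasurable μ A ∩ s) ((measurableSet_toMeasurable μ A).inter hs)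
    inter_subset_right
  refine ⟨i, _, hi, measure_mono_null inter_subset_left ?_,
    subset_inter (subset_toMeasurable μ A) hAs⟩
  rwa [measure_toMeasurable]

theorem measurableSet_nullUnion {i : ι} (hc : (𝓑 i).Countable)
    (hm : ∀ E ∈ 𝓑 i, MeasurableSet E) : MeasurableSet (nullUnion 𝓑 μ i) :=
  .sUnion (hc.mono (sep_subset _ _)) fun E hE => hm E hE.1

end NullUnion

section ChainHull

variable {α ι : Type*} [MeasurableSpace α] [LinearOrder ι] (𝓑 : ι → Set (Set α)) (μ : Measure α)

/-- The outer intersection runs over the stages `i ≤ α(A)`, `α(A)` being the first stage at which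
`A` has a null cover. -/
def chainHull (A : Set α) : Set α :=
  ⋂ i ∈ {i | ∀ j < i, ¬ IsNullCoveredAt 𝓑 μ A j},
    ⋂ E ∈ {E ∈ 𝓑 i | A ⊆ E}, E ∪ nullUnion 𝓑 μ i

variable {𝓑 μ}

theorem subset_chainHull (A : Set α) : A ⊆ chainHull 𝓑 μ A :=
  fun _ hx => mem_iInter₂.2 fun _ _ => mem_iInter₂.2 fun _ hE => Or.inl (hE.2 hx)

theorem chainHull_subset {A E : Set α} {i : ι} (hi : ∀ j < i, ¬ IsNullCoveredAt 𝓑 μ A j)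
    (hE : E ∈ 𝓑 i) (hAE : A ⊆ E) : chainHull 𝓑 μ A ⊆ E ∪ nullUnion 𝓑 μ i :=
  fun _ hx => mem_iInter₂.1 (mem_iInter₂.1 hx i hi) E ⟨hE, hAE⟩

theorem measurableSet_chainHull (hc : ∀ i, (𝓑 i).Countable)
    (hm : ∀ i, ∀ E ∈ 𝓑 i, MeasurableSet E) {A : Set α} {i : ι} (hIic : (Iic i).Countable)
    (hA : IsNullCoveredAt 𝓑 μ A i) : MeasurableSet (chainHull 𝓑 μ A) := by
  have hstages : {j | ∀ k < j, ¬ IsNullCoveredAt 𝓑 μ A k}.Countable :=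
    hIic.mono fun j hj => not_lt.1 fun hij => hj i hij hA
  exact .biInter hstages fun j _ => .biInter ((hc j).mono (sep_subset _ _)) fun E hE =>
    (hm j E hE.1).union (measurableSet_nullUnion (hc j) (hm j))

theorem chainHull_union_subset (h𝓑 : Monotone 𝓑)
    (hunion : ∀ i, ∀ E ∈ 𝓑 i, ∀ F ∈ 𝓑 i, E ∪ F ∈ 𝓑 i) (A A' : Set α) :
    chainHull 𝓑 μ (A ∪ A') ⊆ chainHull 𝓑 μ A ∪ chainHull 𝓑 μ A' := by
  intro x hx
  by_contra hx'
  simp only [chainHull, mem_union, mem_iInter₂, not_or, not_forall] at hx'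
  obtain ⟨⟨i, hi, E, ⟨hE, hAE⟩, hxE⟩, ⟨i', hi', E', ⟨hE', hAE'⟩, hxE'⟩⟩ := hx'
  have hmax : ∀ j < i ⊔ i', ¬ IsNullCoveredAt 𝓑 μ (A ∪ A') j := by
    rintro j hj ⟨F, hF, hF0, hAF⟩
    rcases lt_sup_iff.1 hj with hj | hj
    · exact hi j hj ⟨F, hF, hF0, subset_union_left.trans hAF⟩
    · exact hi' j hj ⟨F, hF, hF0, subset_union_right.trans hAF⟩
  have hEE' : E ∪ E' ∈ 𝓑 (i ⊔ i') :=
    hunion _ _ (h𝓑 le_sup_left hE) _ (h𝓑 le_sup_right hE')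
  have hx := chainHull_subset hmax hEE' (union_subset_union hAE hAE') hx
  rw [(nullUnion_mono h𝓑).map_sup] at hx
  simp only [mem_union, sup_eq_union] at hx hxE hxE'
  tauto

variable [WellFoundedLT ι]

theorem chainHull_subset_nullUnion (h𝓑 : Monotone 𝓑) {A : Set α} {i : ι}
    (hA : IsNullCoveredAt 𝓑 μ A i) : chainHull 𝓑 μ A ⊆ nullUnion 𝓑 μ i := by
  obtain ⟨j, ⟨E, hE, hE0, hAE⟩, hj⟩ :=
    wellFounded_lt.has_min {j | IsNullCoveredAt 𝓑 μ A j} ⟨i, hA⟩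
  calc chainHull 𝓑 μ A ⊆ E ∪ nullUnion 𝓑 μ j :=
        chainHull_subset (fun k hkj hk => hj k hk hkj) hE hAE
    _ = nullUnion 𝓑 μ j := union_eq_self_of_subset_left (subset_nullUnion hE hE0)
    _ ⊆ nullUnion 𝓑 μ i := nullUnion_mono h𝓑 (not_lt.1 (hj i hA))

theorem measure_chainHull (h𝓑 : Monotone 𝓑) {A : Set α} {i : ι} (hc : (𝓑 i).Countable)
    (hA : IsNullCoveredAt 𝓑 μ A i) : μ (chainHull 𝓑 μ A) = 0 :=
  measure_mono_null (chainHull_subset_nullUnion h𝓑 hA) (measure_nullUnion hc)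

theorem chainHull_subset_union_nullUnion (h𝓑 : Monotone 𝓑) {A B : Set α} {i : ι}
    (hB : B ∈ 𝓑 i) (hAB : A ⊆ B) : chainHull 𝓑 μ A ⊆ B ∪ nullUnion 𝓑 μ i := by
  by_cases hi : ∀ j < i, ¬ IsNullCoveredAt 𝓑 μ A j
  · exact chainHull_subset hi hB hAB
  · push Not at hi
    obtain ⟨j, hji, hA⟩ := hi
    exact (chainHull_subset_nullUnion h𝓑 hA).trans
      ((nullUnion_mono h𝓑 hji.le).trans subset_union_right)

theorem chainHull_mono (h𝓑 : Monotone 𝓑) {A A' : Set α} (h : A ⊆ A') :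
    chainHull 𝓑 μ A ⊆ chainHull 𝓑 μ A' :=
  subset_iInter₂ fun _ _ => subset_iInter₂ fun _ hE =>
    chainHull_subset_union_nullUnion h𝓑 hE.1 (h.trans hE.2)

theorem measure_biUnion_chainHull_diff (h𝓑 : Monotone 𝓑) {B : Set α} {i : ι}
    (hc : (𝓑 i).Countable) (hB : B ∈ 𝓑 i) {𝒜 : Set (Set α)} (h𝒜 : ∀ A ∈ 𝒜, A ⊆ B) :
    μ ((⋃ A ∈ 𝒜, chainHull 𝓑 μ A) \ B) = 0 :=
  measure_mono_null (sdiff_subset_iff.2 <| iUnion₂_subset fun A hA =>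
    chainHull_subset_union_nullUnion h𝓑 hB (h𝒜 A hA)) (measure_nullUnion hc)

end ChainHull

section FiniteUnionChain

variable {α ι : Type*} [Preorder ι]

def finiteUnionChain (g : ι → Set α) (i : ι) : Set (Set α) :=
  (fun F => ⋃ j ∈ F, g j) '' {F | F.Finite ∧ F ⊆ Iic i}

variable {g : ι → Set α}

theorem finiteUnionChain_mono : Monotone (finiteUnionChain g) :=
  fun _ _ hij => image_mono fun _ hF => ⟨hF.1, hF.2.trans (Iic_subset_Iic.2 hij)⟩

theorem countable_finiteUnionChain {i : ι} (hi : (Iic i).Countable) :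
    (finiteUnionChain g i).Countable :=
  (countable_ofPred_finite_subset hi).image _

theorem self_mem_finiteUnionChain (i : ι) : g i ∈ finiteUnionChain g i :=
  ⟨{i}, ⟨finite_singleton i, singleton_subset_iff.2 self_mem_Iic⟩, biUnion_singleton i g⟩

theorem union_mem_finiteUnionChain {i : ι} {E F : Set α} (hE : E ∈ finiteUnionChain g i)
    (hF : F ∈ finiteUnionChain g i) : E ∪ F ∈ finiteUnionChain g i := by
  obtain ⟨S, ⟨hS, hSi⟩, rfl⟩ := hE
  obtain ⟨T, ⟨hT, hTi⟩, rfl⟩ := hF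
  exact ⟨S ∪ T, ⟨hS.union hT, union_subset hSi hTi⟩, biUnion_union S T g⟩

theorem measurableSet_of_mem_finiteUnionChain [MeasurableSpace α]
    (hg : ∀ j, MeasurableSet (g j)) {i : ι} {E : Set α} (hE : E ∈ finiteUnionChain g i) :
    MeasurableSet E := by
  obtain ⟨F, ⟨hF, -⟩, rfl⟩ := hE
  exact .biUnion hF.countable fun j _ => hg j

theorem subset_of_mem_finiteUnionChain {s : Set α} (hg : ∀ j, g j ⊆ s) {i : ι} {E : Set α}
    (hE : E ∈ finiteUnionChain g i) : E ⊆ s := by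
  obtain ⟨F, -, rfl⟩ := hE
  exact iUnion₂_subset fun j _ => hg j

end FiniteUnionChain

open Cardinal Ordinal

theorem countable_Iic_omega_one (i : (ω₁ : Ordinal.{0}).ToType) : (Iic i).Countable := by
  rw [← Iio_insert]
  refine Countable.insert i ?_
  rw [← le_aleph0_iff_set_countable, ← lt_aleph_one_iff]
  simpa using mk_Iio_lt i (by simp)

theorem mk_measurableSet_real_le_continuum : #{s : Set ℝ | MeasurableSet s} ≤ 𝔠 := by
  have h : Real.measurableSpace = MeasurableSpace.generateFrom (range Iio) :=
    BorelSpace.measurable_eq.trans (borel_eq_generateFrom_Iio ℝ)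
  rw [h]
  exact MeasurableSpace.cardinal_measurableSet_le_continuum (mk_range_le.trans mk_real.le)

universe u in
theorem exists_surjective_omega_one_measurableSet_Icc (hCH : (2 : Cardinal.{u}) ^ ℵ₀ = ℵ₁) :
    ∃ g : (ω₁ : Ordinal.{0}).ToType → {B : Set ℝ // MeasurableSet B ∧ B ⊆ Icc 0 1},
      Function.Surjective g := by
  have hcont : Cardinal.continuum.{0} = ℵ₁ := by
    apply Cardinal.lift_injective.{u}
    simpa [← two_power_aleph0] using hCH
  have hle : #{B : Set ℝ // MeasurableSet B ∧ B ⊆ Icc 0 1} ≤ #(ω₁ : Ordinal.{0}).ToType :=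
    calc #{B : Set ℝ // MeasurableSet B ∧ B ⊆ Icc 0 1}
        ≤ #{s : Set ℝ | MeasurableSet s} := mk_le_mk_of_subset fun _ h => h.1
      _ ≤ 𝔠 := mk_measurableSet_real_le_continuum
      _ = #(ω₁ : Ordinal.{0}).ToType := by simp [hcont]
  have : Nonempty {B : Set ℝ // MeasurableSet B ∧ B ⊆ Icc 0 1} :=
    ⟨⟨∅, .empty, empty_subset _⟩⟩
  obtain ⟨e⟩ := hle
  exact ⟨_, Function.invFun_surjective e.injective⟩

/-- Assuming CH, there is a monotone Borel hull operation `φ` on `N` which is moreover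
subadditive, and such that for every Borel `B ⊆ [0,1]`, the union of `φ(A)` over all null
`A ⊆ B` exceeds `B` only by a null set. -/
theorem subadditive_vanishing_borel_hull_on_null_of_CH
    (hCH : (2 : Cardinal) ^ Cardinal.aleph0 = Cardinal.aleph 1) :
    ∃ φ : Set ℝ → Set ℝ, IsMonotoneHullOn NullSets MeasurableSet φ ∧
      (∀ A ∈ NullSets, ∀ A' ∈ NullSets, φ (A ∪ A') ⊆ φ A ∪ φ A') ∧
      (∀ B : Set ℝ, MeasurableSet B → B ⊆ Icc (0:ℝ) 1 →
        volume ((⋃ A ∈ {A | A ∈ NullSets ∧ A ⊆ B}, φ A) \ B) = 0) := by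
  obtain ⟨g, hg⟩ := exists_surjective_omega_one_measurableSet_Icc hCH
  set 𝓑 := finiteUnionChain fun i => (g i : Set ℝ)
  have hmono : Monotone 𝓑 := finiteUnionChain_mono
  have hcount (i) : (𝓑 i).Countable := countable_finiteUnionChain (countable_Iic_omega_one i)
  have hmeas (i) (E) (hE : E ∈ 𝓑 i) : MeasurableSet E :=
    measurableSet_of_mem_finiteUnionChain (fun j => (g j).2.1) hE
  have hmem (B : Set ℝ) (hB : MeasurableSet B) (hB' : B ⊆ Icc 0 1) : ∃ i, B ∈ 𝓑 i := by
    obtain ⟨i, hi⟩ := hg ⟨B, hB, hB'⟩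
    have hgi : (g i : Set ℝ) = B := congrArg Subtype.val hi
    exact ⟨i, hgi ▸ self_mem_finiteUnionChain (g := fun i => (g i : Set ℝ)) i⟩
  refine ⟨chainHull 𝓑 volume, ⟨fun A hA => ?_, fun A _ A' _ => chainHull_mono hmono⟩,
    fun A _ A' _ => chainHull_union_subset hmono
      (fun _ _ hE _ hF => union_mem_finiteUnionChain hE hF) A A',
    fun B hB hB' => ?_⟩
  · obtain ⟨i, hi⟩ := exists_isNullCoveredAt hmem measurableSet_Icc hA.1 hA.2
    refine ⟨measurableSet_chainHull hcount hmeas (countable_Iic_omega_one i) hi,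
      (chainHull_subset_nullUnion hmono hi).trans (nullUnion_subset fun E hE =>
        subset_of_mem_finiteUnionChain (fun j => (g j).2.2) hE), subset_chainHull A, ?_⟩
    rw [measure_chainHull hmono (hcount i) hi, hA.2]
  · obtain ⟨i, hi⟩ := hmem B hB hB'
    exact measure_biUnion_chainHull_diff hmono (hcount i) hi fun A hA => hA.2
end
end

section
/- Suppose there exists a monotone map ψ : L → P([0,1]) such that ψ(M) is a Borel set with λ(M Δ ψ(M)) = 0 for every M ∈ L and M ⊆ M' implies ψ(M) ⊆ ψ(M'), and suppose there exists a monotone Borel hull operation φ on N satisfying: (1) φ(A ∪ A') ⊆ φ(A) ∪ φ(A') for all A, A' ∈ N, and (2) for every Borel set B ⊆ [0,1], the set (⋃{φ(A) : A ⊆ B, A ∈ N}) \ B is Lebesgue null. Then there exists a monotone Borel hull operation φ* on L which extends φ (i.e. φ*(A) = φ(A) for every A ∈ N). -/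
open MeasureTheory Set

noncomputable section

/-!
Extend `φ` by `φ*(M) = ψ(M) ∪ φ(E(M))` for non-null `M` (`extendHull`), where the null set
`E(M) = (M ∪ U(ψ M)) \ ψ M` (`liftingDefect`) collects both the error of the lifting and the
part of `U(ψ M) = ⋃ {φ(A) : A ⊆ ψ M null}` (`hullsBelow`) sticking out of `ψ M`.
Subadditivity splits any null `N ⊆ M ∪ U(ψ M)` into `N ∩ ψ M`, whose hull lies in
`U(ψ M) ⊆ ψ M ∪ E(M)`, and `N \ ψ M ⊆ E(M)`; hence `φ(N) ⊆ φ*(M)`, which gives monotonicity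
in all cases.
-/

namespace IsMonotoneHullOn

variable {D : Set (Set ℝ)} {Good : Set ℝ → Prop} {φ : Set ℝ → Set ℝ} {A A' : Set ℝ}

lemma good (hφ : IsMonotoneHullOn D Good φ) (hA : A ∈ D) : Good (φ A) := (hφ.1 A hA).1

lemma subset_Icc (hφ : IsMonotoneHullOn D Good φ) (hA : A ∈ D) : φ A ⊆ Icc 0 1 :=
  (hφ.1 A hA).2.1

lemma subset_hull (hφ : IsMonotoneHullOn D Good φ) (hA : A ∈ D) : A ⊆ φ A :=
  (hφ.1 A hA).2.2.1

lemma mono_s10 (hφ : IsMonotoneHullOn D Good φ) (hA : A ∈ D) (hA' : A' ∈ D) (h : A ⊆ A') :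
    φ A ⊆ φ A' :=
  hφ.2 A hA A' hA' h

lemma measure_eq_zero (hφ : IsMonotoneHullOn NullSets Good φ) (hA : A ∈ NullSets) :
    volume (φ A) = 0 :=
  (hφ.1 A hA).2.2.2.trans hA.2

end IsMonotoneHullOn

lemma mem_nullSets_of_subset {A B : Set ℝ} (hA : A ∈ NullSets) (hBA : B ⊆ A) :
    B ∈ NullSets :=
  ⟨hBA.trans hA.1, measure_mono_null hBA hA.2⟩

def hullsBelow (φ : Set ℝ → Set ℝ) (B : Set ℝ) : Set ℝ :=
  ⋃ A ∈ {A | A ∈ NullSets ∧ A ⊆ B}, φ A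

section HullsBelow

variable {Good : Set ℝ → Prop} {φ : Set ℝ → Set ℝ} {A B B' : Set ℝ}

lemma hull_subset_hullsBelow (hA : A ∈ NullSets) (hAB : A ⊆ B) : φ A ⊆ hullsBelow φ B :=
  subset_biUnion_of_mem (u := φ) ⟨hA, hAB⟩

lemma hullsBelow_mono (h : B ⊆ B') : hullsBelow φ B ⊆ hullsBelow φ B' :=
  biUnion_subset_biUnion_left fun _ hA => ⟨hA.1, hA.2.trans h⟩

lemma hullsBelow_subset_Icc (hφ : IsMonotoneHullOn NullSets Good φ) :
    hullsBelow φ B ⊆ Icc 0 1 :=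
  iUnion₂_subset fun _ hA => hφ.subset_Icc hA.1

lemma hull_subset_union_hull_of_hullsBelow_diff_subset
    (hφ : IsMonotoneHullOn NullSets Good φ)
    (hsub : ∀ A ∈ NullSets, ∀ A' ∈ NullSets, φ (A ∪ A') ⊆ φ A ∪ φ A')
    {E N : Set ℝ} (hE : E ∈ NullSets) (hN : N ∈ NullSets)
    (hUE : hullsBelow φ B \ B ⊆ E) (hNE : N \ B ⊆ E) :
    φ N ⊆ B ∪ φ E := by
  have hN₁ : N ∩ B ∈ NullSets := mem_nullSets_of_subset hN inter_subset_left
  have hN₂ : N \ B ∈ NullSets := mem_nullSets_of_subset hN sdiff_subset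
  have h_inter : φ (N ∩ B) ⊆ B ∪ φ E := fun x hx => by
    by_cases hxB : x ∈ B
    · exact .inl hxB
    · exact .inr <| hφ.subset_hull hE <|
        hUE ⟨hull_subset_hullsBelow hN₁ inter_subset_right hx, hxB⟩
  have h_diff : φ (N \ B) ⊆ φ E := hφ.mono_s10 hN₂ hE hNE
  calc φ N = φ (N ∩ B ∪ N \ B) := by rw [inter_union_sdiff]
    _ ⊆ φ (N ∩ B) ∪ φ (N \ B) := hsub _ hN₁ _ hN₂
    _ ⊆ B ∪ φ E := union_subset h_inter (h_diff.trans subset_union_right)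

end HullsBelow

section Extension

variable {Good : Set ℝ → Prop} {ψ φ : Set ℝ → Set ℝ} {M M' : Set ℝ}

def liftingDefect (ψ φ : Set ℝ → Set ℝ) (M : Set ℝ) : Set ℝ :=
  (M ∪ hullsBelow φ (ψ M)) \ ψ M

def extendHull (ψ φ : Set ℝ → Set ℝ) (M : Set ℝ) : Set ℝ :=
  if volume M = 0 then φ M else ψ M ∪ φ (liftingDefect ψ φ M)

lemma liftingDefect_mem_nullSets (hφ : IsMonotoneHullOn NullSets Good φ)
    (hM : M ⊆ Icc 0 1) (hψM : volume (symmDiff M (ψ M)) = 0)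
    (hvan : volume (hullsBelow φ (ψ M) \ ψ M) = 0) :
    liftingDefect ψ φ M ∈ NullSets := by
  refine ⟨sdiff_subset.trans (union_subset hM (hullsBelow_subset_Icc hφ)), ?_⟩
  rw [liftingDefect, union_sdiff_distrib]
  exact measure_union_null (measure_mono_null (fun _ hx => .inl hx) hψM) hvan

lemma union_hull_isHull (hφ : IsMonotoneHullOn NullSets MeasurableSet φ) {B E : Set ℝ}
    (hB : MeasurableSet B) (hBI : B ⊆ Icc 0 1) (hMB : volume (symmDiff M B) = 0)
    (hE : E ∈ NullSets) (hME : M \ B ⊆ E) :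
    MeasurableSet (B ∪ φ E) ∧ B ∪ φ E ⊆ Icc 0 1 ∧ M ⊆ B ∪ φ E ∧
      volume (B ∪ φ E) = volume M := by
  refine ⟨hB.union (hφ.good hE), union_subset hBI (hφ.subset_Icc hE), fun x hx => ?_, ?_⟩
  · by_cases hxB : x ∈ B
    · exact .inl hxB
    · exact .inr (hφ.subset_hull hE (hME ⟨hx, hxB⟩))
  · calc volume (B ∪ φ E) = volume B :=
          measure_congr (union_ae_eq_left_of_ae_eq_empty (ae_eq_empty.2 (hφ.measure_eq_zero hE)))
      _ = volume M := (measure_congr (measure_symmDiff_eq_zero_iff.1 hMB)).symm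

lemma hull_subset_extendHull (hφ : IsMonotoneHullOn NullSets Good φ)
    (hsub : ∀ A ∈ NullSets, ∀ A' ∈ NullSets, φ (A ∪ A') ⊆ φ A ∪ φ A')
    (hM' : volume M' ≠ 0) (hE : liftingDefect ψ φ M' ∈ NullSets) {N : Set ℝ}
    (hN : N ∈ NullSets) (hNM' : N ⊆ M' ∪ hullsBelow φ (ψ M')) :
    φ N ⊆ extendHull ψ φ M' := by
  rw [extendHull, if_neg hM']
  exact hull_subset_union_hull_of_hullsBelow_diff_subset hφ hsub hE hN
    (sdiff_subset_sdiff_left subset_union_right) (sdiff_subset_sdiff_left hNM')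

lemma extendHull_mono (hφ : IsMonotoneHullOn NullSets Good φ)
    (hsub : ∀ A ∈ NullSets, ∀ A' ∈ NullSets, φ (A ∪ A') ⊆ φ A ∪ φ A')
    (hψM : ψ M ⊆ ψ M') (hM : M ⊆ Icc 0 1) (hM' : M' ⊆ Icc 0 1)
    (hE : liftingDefect ψ φ M ∈ NullSets) (hE' : liftingDefect ψ φ M' ∈ NullSets)
    (hMM' : M ⊆ M') :
    extendHull ψ φ M ⊆ extendHull ψ φ M' := by
  by_cases h₀' : volume M' = 0
  · have h₀ : volume M = 0 := measure_mono_null hMM' h₀'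
    rw [extendHull, extendHull, if_pos h₀, if_pos h₀']
    exact hφ.mono_s10 ⟨hM, h₀⟩ ⟨hM', h₀'⟩ hMM'
  by_cases h₀ : volume M = 0
  · rw [extendHull, if_pos h₀]
    exact hull_subset_extendHull hφ hsub h₀' hE' ⟨hM, h₀⟩ (hMM'.trans subset_union_left)
  rw [extendHull, if_neg h₀]
  refine union_subset ?_ (hull_subset_extendHull hφ hsub h₀' hE' hE ?_)
  · rw [extendHull, if_neg h₀']
    exact hψM.trans subset_union_left
  · exact sdiff_subset.trans (union_subset_union hMM' (hullsBelow_mono hψM))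

end Extension

/-- Suppose `ψ : L → 𝒫([0,1])` is monotone, with `ψ(M)` Borel and `λ(M Δ ψ(M)) = 0`,
and suppose `φ` is a monotone Borel hull operation on `N` which is subadditive and such
that for every Borel `B ⊆ [0,1]` the union of `φ(A)` over all null `A ⊆ B` exceeds `B`
only by a null set. Then `φ` extends to a monotone Borel hull operation `φ*` on `L`. -/
theorem monotone_borel_hull_on_measurable_of_lifting_and_nice_null_hull
    (ψ : Set ℝ → Set ℝ)
    (hψ : ∀ M ∈ LebSets, MeasurableSet (ψ M) ∧ ψ M ⊆ Icc (0:ℝ) 1 ∧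
      volume (symmDiff M (ψ M)) = 0)
    (hψmono : ∀ M ∈ LebSets, ∀ M' ∈ LebSets, M ⊆ M' → ψ M ⊆ ψ M')
    (φ : Set ℝ → Set ℝ)
    (hφ : IsMonotoneHullOn NullSets MeasurableSet φ)
    (hsub : ∀ A ∈ NullSets, ∀ A' ∈ NullSets, φ (A ∪ A') ⊆ φ A ∪ φ A')
    (hvan : ∀ B : Set ℝ, MeasurableSet B → B ⊆ Icc (0:ℝ) 1 →
      volume ((⋃ A ∈ {A | A ∈ NullSets ∧ A ⊆ B}, φ A) \ B) = 0) :
    ∃ φs : Set ℝ → Set ℝ, IsMonotoneHullOn LebSets MeasurableSet φs ∧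
      ∀ A ∈ NullSets, φs A = φ A := by
  have hdefect : ∀ M ∈ LebSets, liftingDefect ψ φ M ∈ NullSets := fun M hM =>
    liftingDefect_mem_nullSets hφ hM.1 (hψ M hM).2.2 (hvan _ (hψ M hM).1 (hψ M hM).2.1)
  refine ⟨extendHull ψ φ, ⟨fun M hM => ?_, fun M hM M' hM' hMM' => ?_⟩,
    fun A hA => if_pos hA.2⟩
  · by_cases h₀ : volume M = 0
    · rw [extendHull, if_pos h₀]
      exact hφ.1 M ⟨hM.1, h₀⟩
    · obtain ⟨hψM, hψI, hMψ⟩ := hψ M hM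
      rw [extendHull, if_neg h₀]
      exact union_hull_isHull hφ hψM hψI hMψ (hdefect M hM)
        (sdiff_subset_sdiff_left subset_union_left)
  · exact extendHull_mono hφ hsub (hψmono M hM M' hM' hMM') hM.1 hM'.1 (hdefect M hM)
      (hdefect M' hM') hMM'
end
end

section
/- Assume that there exists a monotone G_δ hull operation on N, the class of Lebesgue null subsets of [0,1]. Then for every chain C ⊆ P([0,1]) (i.e. a family of subsets of [0,1] totally ordered by inclusion: for every C, C' ∈ C either C ⊆ C' or C' ⊆ C), there exists a monotone G_δ hull operation on C. -/
/-!
Along a chain `C`, a member of strictly smaller outer measure is contained in one of larger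
measure. Choose a countable set `Q` of measure values of `C` approximating each such value from
above, and for `q ∈ Q` a Gδ hull `G q` of a member of `C` of measure `q`. Intersecting `[0,1]`
with the `G q` for `q ∈ Q`, `q ≥ r` (resp. `q > r`) gives Gδ sets `lower r ⊆ upper r` with
`upper r ⊆ lower r'` for `r < r'`; each `A ∈ C` lies in `upper (λ* A)` and, up to a null set, in
`lower (λ* A)`, a set of measure `λ* A`. For a monotone Gδ hull operation `ψ` on null sets,
`A ↦ lower a ∪ (ψ (A \ lower a) ∩ upper a)` with `a = λ* A` is then a monotone Gδ hull operation
on `C`: for `a < a'` the gap between `upper a` and `lower a'` orders the hulls of sets of different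
measure, and `ψ` orders those of sets of equal measure.
-/

open MeasureTheory Set

noncomputable section

open Filter Topology
open scoped ENNReal

theorem MeasureTheory.Measure.exists_isGδ_superset_measure_eq {α : Type*} [TopologicalSpace α]
    [MeasurableSpace α] (μ : Measure α) [μ.OuterRegular] {A : Set α} (hA : μ A ≠ ∞) :
    ∃ G ⊇ A, IsGδ G ∧ μ G = μ A := by
  have hU : ∀ n : ℕ, ∃ U ⊇ A, IsOpen U ∧ μ U < μ A + (n : ℝ≥0∞)⁻¹ := fun n =>
    A.exists_isOpen_lt_of_lt _ (ENNReal.lt_add_right hA (by simp))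
  choose U hAU hUo hUμ using hU
  refine ⟨⋂ n, U n, subset_iInter hAU, .iInter fun n => (hUo n).isGδ,
    le_antisymm ?_ (measure_mono (subset_iInter hAU))⟩
  have hlim : Tendsto (fun n : ℕ => μ A + (n : ℝ≥0∞)⁻¹) atTop (𝓝 (μ A)) := by
    simpa using tendsto_const_nhds.add ENNReal.tendsto_inv_nat_nhds_zero
  exact ge_of_tendsto' hlim fun n => (measure_mono (iInter_subset _ n)).trans (hUμ n).le

theorem exists_countable_subset_forall_exists_mem_Ico {α : Type*} [LinearOrder α]
    [TopologicalSpace α] [OrderTopology α] [SecondCountableTopology α] (R : Set α) :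
    ∃ Q ⊆ R, Q.Countable ∧ ∀ r ∈ R, ∀ s, r < s → ∃ q ∈ Q, q ∈ Ico r s := by
  obtain ⟨D, hDR, hDc, hRD⟩ :=
    (TopologicalSpace.IsSeparable.of_separableSpace R).exists_countable_dense_subset
  refine ⟨D ∪ {x ∈ R | 𝓝[R ∩ Ioi x] x = ⊥}, union_subset hDR (sep_subset _ _),
    hDc.union countable_setOfPred_isolated_right_within, fun r hr s hrs => ?_⟩
  by_cases hiso : 𝓝[R ∩ Ioi r] r = ⊥
  · exact ⟨r, Or.inr ⟨hr, hiso⟩, left_mem_Ico.2 hrs⟩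
  -- `r` is not isolated on the right in `R`, so some `y ∈ R ∩ (r, s)` is approximated by `D`
  obtain ⟨y, hyR, hy⟩ := (neBot_iff.2 hiso).nonempty_of_mem
    (inter_mem_nhdsWithin (R ∩ Ioi r) (Iio_mem_nhds hrs))
  obtain ⟨q, hq, hqD⟩ := mem_closure_iff.1 (hRD hyR.1) _ isOpen_Ioo ⟨hyR.2, hy⟩
  exact ⟨q, Or.inl hqD, hq.1.le, hq.2⟩

theorem measure_diff_eq_zero_of_subset_of_measure_le {α : Type*} [MeasurableSpace α]
    {μ : Measure α} {A B G : Set α} (hG : MeasurableSet G) (hBA : B ⊆ A) (hBG : B ⊆ G)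
    (hAB : μ A ≤ μ B) (hA : μ A ≠ ∞) : μ (A \ G) = 0 := by
  have hAG : μ A ≤ μ (A ∩ G) := hAB.trans (measure_mono (subset_inter hBA hBG))
  have hfin : μ (A ∩ G) ≠ ∞ := measure_ne_top_of_subset inter_subset_left hA
  have hsum : μ (A ∩ G) + μ (A \ G) ≤ μ (A ∩ G) + 0 := by
    rw [measure_inter_add_sdiff A hG, add_zero]; exact hAG
  exact nonpos_iff_eq_zero.1 ((ENNReal.add_le_add_iff_left hfin).1 hsum)

namespace IsChain

variable {α : Type*} [MeasurableSpace α] {μ : Measure α} {C : Set (Set α)} {A B : Set α}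

theorem subset_of_measure_lt (hC : IsChain (· ⊆ ·) C) (hA : A ∈ C) (hB : B ∈ C)
    (hAB : μ A < μ B) : A ⊆ B :=
  (hC.total hA hB).resolve_right fun hBA => (measure_mono hBA).not_gt hAB

theorem measure_diff_eq_zero_of_measure_le (hC : IsChain (· ⊆ ·) C) (hA : A ∈ C) (hB : B ∈ C)
    {G : Set α} (hG : MeasurableSet G) (hBG : B ⊆ G) (hAB : μ A ≤ μ B) (hA_top : μ A ≠ ∞) :
    μ (A \ G) = 0 := by
  rcases hC.total hA hB with hAB' | hBA
  · rw [sdiff_eq_empty.2 (hAB'.trans hBG), measure_empty]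
  · exact measure_diff_eq_zero_of_subset_of_measure_le hG hBA hBG hAB hA_top

end IsChain

structure IsGδLevels (C : Set (Set ℝ)) (lower upper : ℝ≥0∞ → Set ℝ) : Prop where
  isGδ_lower : ∀ r, IsGδ (lower r)
  isGδ_upper : ∀ r, IsGδ (upper r)
  lower_subset_Icc : ∀ r, lower r ⊆ Icc 0 1
  lower_subset_upper : ∀ r, lower r ⊆ upper r
  upper_subset_lower : ∀ ⦃r r'⦄, r < r' → upper r ⊆ lower r'
  subset_upper : ∀ A ∈ C, A ⊆ upper (volume A)
  measure_diff_lower : ∀ A ∈ C, volume (A \ lower (volume A)) = 0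
  measure_lower_le : ∀ A ∈ C, volume (lower (volume A)) ≤ volume A

def levelHull (lower upper : ℝ≥0∞ → Set ℝ) (ψ : Set ℝ → Set ℝ) (A : Set ℝ) : Set ℝ :=
  lower (volume A) ∪ (ψ (A \ lower (volume A)) ∩ upper (volume A))

theorem IsGδLevels.isMonotoneHullOn {C : Set (Set ℝ)} {lower upper : ℝ≥0∞ → Set ℝ}
    {ψ : Set ℝ → Set ℝ} (hL : IsGδLevels C lower upper) (hψ : IsMonotoneHullOn NullSets IsGδ ψ)
    (hC : ∀ c ∈ C, c ⊆ Icc 0 1) : IsMonotoneHullOn C IsGδ (levelHull lower upper ψ) := by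
  obtain ⟨hψ_hull, hψ_mono⟩ := hψ
  have hnull : ∀ A ∈ C, A \ lower (volume A) ∈ NullSets := fun A hA =>
    ⟨sdiff_subset.trans (hC A hA), hL.measure_diff_lower A hA⟩
  refine ⟨fun A hA => ?_, fun A hA A' hA' hAA' => ?_⟩
  · obtain ⟨hGδ, hIcc, hsub, hμ⟩ := hψ_hull _ (hnull A hA)
    have hA_sub : A ⊆ levelHull lower upper ψ A := fun x hx =>
      (em (x ∈ lower (volume A))).imp id fun hx' => ⟨hsub ⟨hx, hx'⟩, hL.subset_upper A hA hx⟩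
    refine ⟨(hL.isGδ_lower _).union (hGδ.inter (hL.isGδ_upper _)),
      union_subset (hL.lower_subset_Icc _) (inter_subset_left.trans hIcc), hA_sub,
      le_antisymm ?_ (measure_mono hA_sub)⟩
    calc volume (levelHull lower upper ψ A)
        ≤ volume (lower (volume A)) + volume (ψ (A \ lower (volume A))) :=
          (measure_mono (union_subset_union_right _ inter_subset_left)).trans (measure_union_le _ _)
      _ ≤ volume A := by
          rw [hμ, hL.measure_diff_lower A hA, add_zero]; exact hL.measure_lower_le A hA
  · rcases (measure_mono (μ := volume) hAA').eq_or_lt with heq | hlt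
    · have hnull' := hnull A' hA'
      unfold levelHull
      rw [← heq] at hnull' ⊢
      exact union_subset_union_right _ (inter_subset_inter_left _
        (hψ_mono _ (hnull A hA) _ hnull' (sdiff_subset_sdiff_left hAA')))
    · exact (union_subset (hL.lower_subset_upper _) inter_subset_right).trans
        ((hL.upper_subset_lower hlt).trans subset_union_left)

theorem IsChain.exists_isGδLevels {C : Set (Set ℝ)} (hchain : IsChain (· ⊆ ·) C)
    (hC : ∀ c ∈ C, c ⊆ Icc 0 1) : ∃ lower upper, IsGδLevels C lower upper := by
  have hfin : ∀ c ∈ C, volume c ≠ ∞ := fun c hc =>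
    measure_ne_top_of_subset (hC c hc) measure_Icc_lt_top.ne
  obtain ⟨Q, hQR, hQc, hQ⟩ := exists_countable_subset_forall_exists_mem_Ico (volume '' C)
  have hrep : ∀ q ∈ Q, ∃ B ∈ C, volume B = q := fun q hq => hQR hq
  choose! B hBC hBμ using hrep
  choose! G hBG hGδ hGμ using fun q (hq : q ∈ Q) =>
    (volume : Measure ℝ).exists_isGδ_superset_measure_eq (hfin _ (hBC q hq))
  set level : Set ℝ≥0∞ → Set ℝ := fun s => Icc 0 1 ∩ ⋂ q ∈ Q ∩ s, G q
  have hlevel_isGδ (s : Set ℝ≥0∞) : IsGδ (level s) :=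
    isClosed_Icc.isGδ.inter (.biInter (hQc.mono inter_subset_left) fun q hq => hGδ q hq.1)
  have hlevel_anti {s t : Set ℝ≥0∞} (hst : s ⊆ t) : level t ⊆ level s :=
    inter_subset_inter_right _ (biInter_subset_biInter_left (inter_subset_inter_right _ hst))
  refine ⟨fun r => level (Ici r), fun r => level (Ioi r), fun r => hlevel_isGδ _,
    fun r => hlevel_isGδ _, fun r => inter_subset_left, fun r => hlevel_anti Ioi_subset_Ici_self,
    fun r r' h => hlevel_anti (Ici_subset_Ioi.2 h), fun A hA => ?_, fun A hA => ?_, fun A hA => ?_⟩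
  · refine subset_inter (hC A hA) (subset_iInter₂ fun q hq => ?_)
    have hlt : volume A < volume (B q) := (hBμ q hq.1).symm ▸ hq.2
    exact (hchain.subset_of_measure_lt hA (hBC q hq.1) hlt).trans (hBG q hq.1)
  · have hcover : A \ level (Ici (volume A)) ⊆ ⋃ q ∈ Q ∩ Ici (volume A), A \ G q := by
      intro x ⟨hxA, hx⟩
      by_contra hx'
      simp only [mem_iUnion, Set.mem_sdiff, not_exists, not_and, not_not] at hx'
      exact hx ⟨hC A hA hxA, mem_iInter₂.2 fun q hq => hx' q hq hxA⟩
    refine measure_mono_null hcover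
      ((measure_biUnion_null_iff (hQc.mono inter_subset_left)).2 fun q hq => ?_)
    have hle : volume A ≤ volume (B q) := (hBμ q hq.1).symm ▸ hq.2
    exact hchain.measure_diff_eq_zero_of_measure_le hA (hBC q hq.1) (hGδ q hq.1).measurableSet
      (hBG q hq.1) hle (hfin A hA)
  · refine le_of_forall_gt fun c hc => ?_
    obtain ⟨q, hq, hAq, hqc⟩ := hQ _ (mem_image_of_mem _ hA) c hc
    calc volume (level (Ici (volume A))) ≤ volume (G q) :=
          measure_mono (inter_subset_right.trans (biInter_subset_of_mem ⟨hq, hAq⟩))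
      _ = q := by rw [hGμ q hq, hBμ q hq]
      _ < c := hqc

/-- If there is a monotone Gδ hull operation on `N`, then every chain (w.r.t. inclusion)
of subsets of `[0,1]` admits a monotone Gδ hull operation. -/
theorem monotone_Gdelta_hull_on_chain
    (h : ∃ φ : Set ℝ → Set ℝ, IsMonotoneHullOn NullSets IsGδ φ) :
    ∀ C : Set (Set ℝ), (∀ c ∈ C, c ⊆ Icc (0:ℝ) 1) → IsChain (· ⊆ ·) C →
      ∃ φ : Set ℝ → Set ℝ, IsMonotoneHullOn C IsGδ φ := by
  obtain ⟨ψ, hψ⟩ := h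
  intro C hC hchain
  obtain ⟨lower, upper, hL⟩ := hchain.exists_isGδLevels hC
  exact ⟨levelHull lower upper ψ, hL.isMonotoneHullOn hψ hC⟩
end
end

section
/- (In ZFC.) Let η be an ordinal with η < ω₂, and let (M_α)_{α<η} be subsets of [0,1] with M_α ⊆ M_β whenever α ≤ β < η. Then there exists a family (A_α)_{α<η} of G_δ subsets of [0,1] such that A_α is a hull of M_α for every α < η (i.e. M_α ⊆ A_α and λ*(A_α) = λ*(M_α)) and A_α ⊆ A_β whenever α ≤ β < η. -/
/-!
Fix a well-order of the index set in which every index has only countably many predecessors;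
there is one because there are at most `ℵ₁` indices. Define the hulls by recursion along it.
The hull of `M i` is chosen inside the hulls already defined for the indices above `i`: their
intersection is a countable intersection of `G_δ` sets. It must also contain the hulls already
defined for the indices below `i`. These differ from a `G_δ` hull of `M i` only by a countable
union of null sets, so the difference can be covered by a null `G_δ` set.
-/

open MeasureTheory Set

noncomputable section

open scoped ENNReal Cardinal

section GδHull

variable {X : Type*} [TopologicalSpace X] [MeasurableSpace X] (μ : Measure X) [μ.OuterRegular]

theorem exists_isGδ_superset_measure_eq (s : Set X) : ∃ G, IsGδ G ∧ s ⊆ G ∧ μ G = μ s := by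
  rcases eq_or_ne (μ s) ∞ with hs | hs
  · refine ⟨univ, .univ, subset_univ s, ?_⟩
    rw [hs]
    exact top_unique (hs ▸ measure_mono (subset_univ s))
  choose U hsU hU hμU using fun n : ℕ => s.exists_isOpen_lt_of_lt _
    (ENNReal.lt_add_right hs (ENNReal.inv_ne_zero.2 (ENNReal.natCast_ne_top n)))
  refine ⟨⋂ n, U n, .iInter_of_isOpen hU, subset_iInter hsU,
    le_antisymm ?_ (measure_mono (subset_iInter hsU))⟩
  have hlim : Filter.Tendsto (fun n : ℕ => μ s + (n : ℝ≥0∞)⁻¹) Filter.atTop (nhds (μ s)) := by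
    simpa using ENNReal.tendsto_inv_nat_nhds_zero.const_add (μ s)
  exact ge_of_tendsto' hlim fun n => (measure_mono (iInter_subset U n)).trans (hμU n).le

def gδHull (s : Set X) : Set X := (exists_isGδ_superset_measure_eq μ s).choose

theorem isGδ_gδHull (s : Set X) : IsGδ (gδHull μ s) :=
  (exists_isGδ_superset_measure_eq μ s).choose_spec.1

theorem subset_gδHull (s : Set X) : s ⊆ gδHull μ s :=
  (exists_isGδ_superset_measure_eq μ s).choose_spec.2.1

theorem measure_gδHull (s : Set X) : μ (gδHull μ s) = μ s :=
  (exists_isGδ_superset_measure_eq μ s).choose_spec.2.2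

def gδHullAbsorbing (s L : Set X) : Set X := gδHull μ s ∪ gδHull μ (L \ gδHull μ s)

theorem isGδ_gδHullAbsorbing (s L : Set X) : IsGδ (gδHullAbsorbing μ s L) :=
  (isGδ_gδHull μ s).union (isGδ_gδHull μ _)

theorem subset_gδHullAbsorbing_left (s L : Set X) : s ⊆ gδHullAbsorbing μ s L :=
  (subset_gδHull μ s).trans subset_union_left

theorem subset_gδHullAbsorbing_right (s L : Set X) : L ⊆ gδHullAbsorbing μ s L := fun x hx => by
  by_cases hxs : x ∈ gδHull μ s
  · exact .inl hxs
  · exact .inr (subset_gδHull μ _ ⟨hx, hxs⟩)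

theorem measure_gδHullAbsorbing {s L : Set X} (hL : μ (L \ gδHull μ s) = 0) :
    μ (gδHullAbsorbing μ s L) = μ s := by
  refine le_antisymm ?_ (measure_mono (subset_gδHullAbsorbing_left μ s L))
  calc μ (gδHullAbsorbing μ s L) ≤ μ (gδHull μ s) + μ (gδHull μ (L \ gδHull μ s)) :=
        measure_union_le _ _
    _ = μ s := by rw [measure_gδHull, measure_gδHull, hL, add_zero]

end GδHull

theorem MeasureTheory.measure_diff_eq_zero_of_measure_eq {X : Type*} [MeasurableSpace X]
    {μ : Measure X} {s H B : Set X} (hH : MeasurableSet H) (hsH : s ⊆ H) (hμ : μ H = μ s)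
    (hs : μ s ≠ ∞) (hB : MeasurableSet B) (hsB : s ⊆ B) : μ (H \ B) = 0 := by
  have : (H ∩ B : Set X) =ᵐ[μ] H := ae_eq_of_subset_of_measure_ge inter_subset_left
    (hμ.trans_le (measure_mono (subset_inter hsH hsB))) (hH.inter hB).nullMeasurableSet (hμ ▸ hs)
  simpa [sdiff_inter_self_eq_sdiff] using (ae_eq_set.1 this).2

section MonotoneHull

variable {X : Type*} [TopologicalSpace X] [MeasurableSpace X] (μ : Measure X) [μ.OuterRegular]
  {I : Type*} [Preorder I] (r : I → I → Prop) [IsWellFounded I r]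

def monotoneGδHull (M : I → Set X) : I → Set X :=
  IsWellFounded.fix r fun i A =>
    gδHullAbsorbing μ (M i) (⋃ j, ⋃ h : r j i ∧ j ≤ i, A j h.1) ∩
      ⋂ j, ⋂ h : r j i ∧ i ≤ j, A j h.1

theorem monotoneGδHull_eq (M : I → Set X) (i : I) :
    monotoneGδHull μ r M i =
      gδHullAbsorbing μ (M i) (⋃ j ∈ {j | r j i ∧ j ≤ i}, monotoneGδHull μ r M j) ∩
        ⋂ j ∈ {j | r j i ∧ i ≤ j}, monotoneGδHull μ r M j :=
  IsWellFounded.fix_eq r _ i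

variable [OpensMeasurableSpace X] [Std.Trichotomous r]

theorem monotoneGδHull_spec (hr : ∀ i, {j | r j i}.Countable) {M : I → Set X}
    (hM : Monotone M) (hfin : ∀ i, μ (M i) ≠ ∞) (i : I) :
    IsGδ (monotoneGδHull μ r M i) ∧ M i ⊆ monotoneGδHull μ r M i ∧
      μ (monotoneGδHull μ r M i) = μ (M i) ∧
      ∀ j, r j i → (j ≤ i → monotoneGδHull μ r M j ⊆ monotoneGδHull μ r M i) ∧
        (i ≤ j → monotoneGδHull μ r M i ⊆ monotoneGδHull μ r M j) := by
  induction i using IsWellFounded.induction r with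
  | ind i ih =>
  set A := monotoneGδHull μ r M
  set lower := {j | r j i ∧ j ≤ i}
  set upper := {j | r j i ∧ i ≤ j}
  have hAi : A i = gδHullAbsorbing μ (M i) (⋃ j ∈ lower, A j) ∩ ⋂ j ∈ upper, A j :=
    monotoneGδHull_eq μ r M i
  have hU : IsGδ (⋂ j ∈ upper, A j) :=
    .biInter ((hr i).mono fun _ h => h.1) fun j hj => (ih j hj.1).1
  have hMU : M i ⊆ ⋂ j ∈ upper, A j :=
    subset_iInter₂ fun j hj => (hM hj.2).trans (ih j hj.1).2.1
  have hLU : ⋃ j ∈ lower, A j ⊆ ⋂ j ∈ upper, A j := by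
    refine iUnion₂_subset fun j hj => subset_iInter₂ fun k hk => ?_
    rcases trichotomous_of r j k with hjk | rfl | hkj
    · exact ((ih k hk.1).2.2.2 j hjk).1 (hj.2.trans hk.2)
    · exact Subset.rfl
    · exact ((ih j hj.1).2.2.2 k hkj).2 (hj.2.trans hk.2)
  have hL : μ ((⋃ j ∈ lower, A j) \ gδHull μ (M i)) = 0 := by
    simp only [iUnion_sdiff]
    refine (measure_biUnion_null_iff ((hr i).mono fun _ h => h.1)).2 fun j hj => ?_
    obtain ⟨hAj, hMAj, hμAj, -⟩ := ih j hj.1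
    exact measure_diff_eq_zero_of_measure_eq hAj.measurableSet hMAj hμAj (hfin j)
      (isGδ_gδHull μ _).measurableSet ((hM hj.2).trans (subset_gδHull μ _))
  have hMA : M i ⊆ A i := hAi ▸ subset_inter (subset_gδHullAbsorbing_left μ _ _) hMU
  refine ⟨hAi ▸ (isGδ_gδHullAbsorbing μ _ _).inter hU, hMA, le_antisymm ?_ (measure_mono hMA),
    fun j hj => ⟨fun hji => ?_, fun hij => ?_⟩⟩
  · calc μ (A i) ≤ μ (gδHullAbsorbing μ (M i) (⋃ j ∈ lower, A j)) :=
          hAi ▸ measure_mono inter_subset_left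
      _ = μ (M i) := measure_gδHullAbsorbing μ hL
  · have hjL : A j ⊆ ⋃ j ∈ lower, A j := subset_biUnion_of_mem (u := A) ⟨hj, hji⟩
    exact hAi ▸ subset_inter (hjL.trans (subset_gδHullAbsorbing_right μ _ _)) (hjL.trans hLU)
  · exact hAi ▸ inter_subset_right.trans (biInter_subset_of_mem ⟨hj, hij⟩)

theorem exists_monotone_isGδ_hull_of_countable_predecessors (hr : ∀ i, {j | r j i}.Countable)
    {M : I → Set X} (hM : Monotone M) (hfin : ∀ i, μ (M i) ≠ ∞) :
    ∃ A : I → Set X, Monotone A ∧ ∀ i, IsGδ (A i) ∧ M i ⊆ A i ∧ μ (A i) = μ (M i) := by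
  have spec := monotoneGδHull_spec μ r hr hM hfin
  refine ⟨monotoneGδHull μ r M, fun i j hij => ?_,
    fun i => ⟨(spec i).1, (spec i).2.1, (spec i).2.2.1⟩⟩
  rcases trichotomous_of r i j with hrij | rfl | hrji
  · exact ((spec j).2.2.2 i hrij).1 hij
  · exact Subset.rfl
  · exact ((spec i).2.2.2 j hrji).2 hij

end MonotoneHull

theorem Cardinal.exists_isWellOrder_countable_of_mk_le_aleph_one {I : Type*} (hI : #I ≤ ℵ₁) :
    ∃ r : I → I → Prop, IsWellOrder I r ∧ ∀ i, {j | r j i}.Countable := by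
  obtain ⟨r, _, hr⟩ := exists_ord_eq I
  refine ⟨r, inferInstance, fun i => le_aleph0_iff_set_countable.1 (lt_aleph_one_iff.1 ?_)⟩
  calc #{j | r j i} = (Ordinal.typein r i).card := (Ordinal.card_typein i).symm
    _ < #I := card_typein_lt i hr
    _ ≤ ℵ₁ := hI

theorem exists_monotone_isGδ_hull_of_mk_le_aleph_one {X : Type*} [TopologicalSpace X]
    [MeasurableSpace X] [OpensMeasurableSpace X] (μ : Measure X) [μ.OuterRegular]
    {I : Type*} [Preorder I] (hI : #I ≤ ℵ₁) {M : I → Set X} (hM : Monotone M)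
    (hfin : ∀ i, μ (M i) ≠ ∞) :
    ∃ A : I → Set X, Monotone A ∧ ∀ i, IsGδ (A i) ∧ M i ⊆ A i ∧ μ (A i) = μ (M i) := by
  obtain ⟨r, _, hr⟩ := Cardinal.exists_isWellOrder_countable_of_mk_le_aleph_one hI
  exact exists_monotone_isGδ_hull_of_countable_predecessors μ r hr hM hfin

theorem Ordinal.mk_Iio_le_aleph_one {η : Ordinal} (hη : η < (ℵ_ 2).ord) : #(Iio η) ≤ ℵ₁ := by
  rw [Cardinal.mk_Iio_ordinal, Cardinal.lift_le_aleph_one, ← Order.lt_succ_iff,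
    Cardinal.succ_aleph]
  exact Cardinal.lt_ord.1 (by simpa [one_add_one_eq_two] using hη)

/-- (ZFC) Every increasing chain of subsets of `[0,1]` of order type `η < ω₂` admits an
increasing family of Gδ hulls. Here `volume` applied to an arbitrary set is the Lebesgue
outer measure, and `ω₂` is the initial ordinal of `ℵ₂`. -/
theorem monotone_Gdelta_hull_on_wellordered_chain_below_omega_two
    (η : Ordinal) (hη : η < (Cardinal.aleph 2).ord) (M : Ordinal → Set ℝ)
    (hM : ∀ α < η, M α ⊆ Icc (0:ℝ) 1)
    (hmono : ∀ α β : Ordinal, α ≤ β → β < η → M α ⊆ M β) :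
    ∃ A : Ordinal → Set ℝ,
      (∀ α < η, IsGδ (A α) ∧ A α ⊆ Icc (0:ℝ) 1 ∧ M α ⊆ A α ∧
        volume (A α) = volume (M α)) ∧
      (∀ α β : Ordinal, α ≤ β → β < η → A α ⊆ A β) := by
  obtain ⟨A, hAmono, hA⟩ := exists_monotone_isGδ_hull_of_mk_le_aleph_one volume
    (Ordinal.mk_Iio_le_aleph_one hη) (M := fun α : Iio η => M α)
    (fun α β hαβ => hmono α β hαβ β.2)
    (fun α => ((measure_mono (hM α α.2)).trans_lt measure_Icc_lt_top).ne)
  refine ⟨fun α => if h : α < η then A ⟨α, h⟩ ∩ Icc 0 1 else ∅, fun α hα => ?_,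
    fun α β hαβ hβ => ?_⟩
  · obtain ⟨hAG, hMA, hμA⟩ := hA ⟨α, hα⟩
    have hMA' : M α ⊆ A ⟨α, hα⟩ ∩ Icc 0 1 := subset_inter hMA (hM α hα)
    simp only [dif_pos hα]
    exact ⟨hAG.inter isClosed_Icc.isGδ, inter_subset_right, hMA',
      le_antisymm ((measure_mono inter_subset_left).trans_eq hμA) (measure_mono hMA')⟩
  · simp only [dif_pos hβ, dif_pos (hαβ.trans_lt hβ)]
    exact inter_subset_inter_left _ (hAmono (show (⟨α, _⟩ : Iio η) ≤ ⟨β, hβ⟩ from hαβ))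
end
end

section
/- For every infinite set X there exists a family C of subsets of X which is a chain with respect to inclusion (for all C, C' ∈ C, either C ⊆ C' or C' ⊆ C) and whose cardinality is strictly greater than the cardinality of X. -/
open Set Cardinal

/-!
Let `μ` be the least cardinal with `#X < 2 ^ μ`. The binary sequences indexed by `μ`, ordered
lexicographically, form a linear order of size `2 ^ μ` in which the sequences vanishing beyond
some index are dense: between any `x < y` lies such a `d` with `x < d ≤ y`. There are at most
`μ * sup_{λ < μ} 2 ^ λ ≤ #X` of them, so they embed into `X`, and the images of the sets
`{d | d ≤ x}` form a chain of `2 ^ μ` subsets of `X`.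
-/

universe u

section DenseSubset

variable {α : Type*} [LinearOrder α] {D : Set α}

theorem strictMono_setOf_le_of_dense (hD : ∀ x y, x < y → ∃ d ∈ D, x < d ∧ d ≤ y) :
    StrictMono fun a : α => {d : D | (d : α) ≤ a} := by
  intro a b hab
  obtain ⟨d, hdD, had, hdb⟩ := hD a b hab
  refine ssubset_iff_subset_not_subset.2 ⟨fun e he => le_trans he hab.le, fun h => ?_⟩
  exact (h (show (⟨d, hdD⟩ : D) ∈ {e : D | (e : α) ≤ b} from hdb)).not_gt had

theorem exists_isChain_mk_eq_of_dense {α X : Type u} [LinearOrder α] (D : Set α)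
    (hD : ∀ x y, x < y → ∃ d ∈ D, x < d ∧ d ≤ y) (hDX : #D ≤ #X) :
    ∃ C : Set (Set X), IsChain (· ⊆ ·) C ∧ #C = #α := by
  obtain ⟨e⟩ := hDX
  have hF : StrictMono fun a : α => e '' {d : D | (d : α) ≤ a} :=
    e.injective.image_strictMono.comp (strictMono_setOf_le_of_dense hD)
  exact ⟨range _, hF.monotone.isChain_range, mk_range_eq _ hF.injective⟩

end DenseSubset

section BoundedSupport

variable {ι β : Type*} [LinearOrder ι] [WellFoundedLT ι] [LinearOrder β] [OrderBot β]

def extendBot (i : ι) (f : Iic i → β) : ι → β :=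
  fun j => if h : j ≤ i then f ⟨j, h⟩ else ⊥

variable (ι β) in
def boundedSupport : Set (Lex (ι → β)) :=
  ⋃ i : ι, range fun f : Iic i → β => toLex (extendBot i f)

theorem exists_mem_boundedSupport_lt_le {x y : Lex (ι → β)} (h : x < y) :
    ∃ d ∈ boundedSupport ι β, x < d ∧ d ≤ y := by
  obtain ⟨i, hagree, hlt⟩ := h
  refine ⟨_, mem_iUnion.2 ⟨i, mem_range_self fun j : Iic i => y j⟩,
    ⟨i, fun j hj => ?_, ?_⟩, Pi.toLex_monotone fun j => ?_⟩
  · simp [extendBot, hj.le, hagree j hj]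
  · simpa [extendBot] using hlt
  · unfold extendBot
    split_ifs
    exacts [le_rfl, bot_le]

theorem mk_boundedSupport_le {ι β : Type u} [LinearOrder ι] [WellFoundedLT ι] [LinearOrder β]
    [OrderBot β] {κ : Cardinal.{u}} (hκ : ℵ₀ ≤ κ) (hι : #ι ≤ κ)
    (hβ : ∀ i : ι, #β ^ #(Iic i) ≤ κ) : #(boundedSupport ι β) ≤ κ :=
  calc #(boundedSupport ι β)
      ≤ #ι * ⨆ i : ι, #(range fun f : Iic i → β => toLex (extendBot i f)) := mk_iUnion_le _
    _ ≤ κ * κ := by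
      refine mul_le_mul' hι (ciSup_le' fun i => mk_range_le.trans ?_)
      simpa using hβ i
    _ = κ := mul_eq_self hκ

end BoundedSupport

theorem Cardinal.exists_minimal_lt_two_pow (κ : Cardinal.{u}) :
    ∃ μ : Cardinal.{u}, κ < 2 ^ μ ∧ ∀ c < μ, 2 ^ c ≤ κ :=
  have hne : {c : Cardinal.{u} | κ < 2 ^ c}.Nonempty := ⟨κ, cantor κ⟩
  ⟨sInf {c | κ < 2 ^ c}, csInf_mem hne, fun _ hc => not_lt.1 fun h => notMem_of_lt_csInf' hc h⟩

/-- In every infinite set `X` there is a chain of subsets (w.r.t. inclusion) of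
cardinality strictly greater than that of `X`. -/
theorem exists_big_chain_of_subsets (X : Type*) [Infinite X] :
    ∃ C : Set (Set X), IsChain (· ⊆ ·) C ∧ Cardinal.mk X < Cardinal.mk C := by
  obtain ⟨μ, hXμ, hμmin⟩ := exists_minimal_lt_two_pow #X
  have hμX : μ ≤ #X := not_lt.1 fun h => (cantor #X).not_ge (hμmin _ h)
  have hμ : ℵ₀ ≤ μ := not_lt.1 fun h =>
    (hXμ.trans (power_lt_aleph0 (natCast_lt_aleph0 (n := 2)) h)).not_ge (aleph0_le_mk X)
  have hD : #(boundedSupport μ.ord.ToType (ULift Bool)) ≤ #X := by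
    refine mk_boundedSupport_le (β := ULift Bool) (hμ.trans hμX)
      ((mk_ord_toType μ).trans_le hμX) fun i => ?_
    simpa using hμmin _ (by simpa using mk_Iic_lt i (by simp) (by simpa using hμ))
  obtain ⟨C, hC, hCcard⟩ := exists_isChain_mk_eq_of_dense _
    (fun _ _ => exists_mem_boundedSupport_lt_le) hD
  refine ⟨C, hC, ?_⟩
  rw [hCcard, show #(Lex (μ.ord.ToType → ULift Bool)) = #(μ.ord.ToType → ULift Bool) from rfl]
  simpa using hXμ
end
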